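/- arXiv:1409.7606 — 11 statements merged into one kernel-verified Lean document; each statement's English description precedes it below -/
import Mathlib

section
/- Let V be a finite-dimensional real inner product space, R an algebraic curvature tensor on V, and ε ∈ ℝ such that R(y,x,x,y) ≥ ε for all orthonormal x,y ∈ V. Then for all orthonormal v,w ∈ V the following are equivalent: (1) R(w,v,v,w) = ε; (2) R(w,v,v,u) = ε·⟨w,u⟩ for all u ∈ V (i.e., w is an eigenvector of the Jacobi operator 𝒥_v with eigenvalue ε). -/
open scoped RealInnerProductSpace

/-! The curvature bound says that the symmetric form `B x y = R(x,v,v,y) - ε⟪x,y⟫` is positive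
semidefinite on `vᗮ`, and `R(w,v,v,w) = ε` says that `w ∈ vᗮ` is isotropic for it. An isotropic
vector of a semidefinite form lies in its radical (the discriminant of `t ↦ B(w+tz, w+tz)` must be
`≤ 0`), so `B w` vanishes on `vᗮ`; it also vanishes at `v` because `R(w,v,v,v) = 0` and `w ⊥ v`. -/

theorem LinearMap.apply_eq_zero_of_nonneg_of_apply_self_eq_zero {M : Type*} [AddCommGroup M]
    [Module ℝ M] (B : M →ₗ[ℝ] M →ₗ[ℝ] ℝ) (hB : ∀ x y, B x y = B y x) {w z : M}
    (hw : B w w = 0) (hnonneg : ∀ t : ℝ, 0 ≤ B (w + t • z) (w + t • z)) : B w z = 0 := by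
  have hquad : ∀ t : ℝ, 0 ≤ B z z * (t * t) + 2 * B w z * t + 0 := fun t => by
    have := hnonneg t
    simp only [map_add, map_smul, LinearMap.add_apply, LinearMap.smul_apply, smul_eq_mul,
      hw, hB z w] at this
    linarith
  have := discrim_le_zero hquad
  rw [discrim] at this
  nlinarith [sq_nonneg (B w z)]

namespace AlgebraicCurvatureTensor

section Algebraic

variable {V : Type*} [AddCommGroup V] [Module ℝ V] {R : V →ₗ[ℝ] V →ₗ[ℝ] V →ₗ[ℝ] V →ₗ[ℝ] ℝ}

theorem skew_right (hskew : ∀ X Y Z W : V, R X Y Z W = - R Y X Z W)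
    (hpair : ∀ X Y Z W : V, R X Y Z W = R Z W X Y) (X Y Z W : V) :
    R X Y Z W = - R X Y W Z := by
  rw [hpair, hskew, ← hpair]

theorem jacobi_symm (hskew : ∀ X Y Z W : V, R X Y Z W = - R Y X Z W)
    (hpair : ∀ X Y Z W : V, R X Y Z W = R Z W X Y) (v x y : V) :
    R x v v y = R y v v x := by
  rw [hpair, hskew, skew_right hskew hpair, neg_neg]

theorem jacobi_self_eq_zero (hskew : ∀ X Y Z W : V, R X Y Z W = - R Y X Z W)
    (hpair : ∀ X Y Z W : V, R X Y Z W = R Z W X Y) (x v : V) : R x v v v = 0 := by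
  have := skew_right hskew hpair x v v v
  linarith

end Algebraic

theorem mul_norm_sq_le_of_inner_eq_zero {V : Type*} [NormedAddCommGroup V]
    [InnerProductSpace ℝ V] {R : V →ₗ[ℝ] V →ₗ[ℝ] V →ₗ[ℝ] V →ₗ[ℝ] ℝ} {ε : ℝ}
    (hsec : ∀ x y : V, ‖x‖ = 1 → ‖y‖ = 1 → ⟪x, y⟫ = 0 → ε ≤ R y x x y)
    {v x : V} (hv : ‖v‖ = 1) (hvx : ⟪v, x⟫ = 0) : ε * ‖x‖ ^ 2 ≤ R x v v x := by
  rcases eq_or_ne x 0 with rfl | hx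
  · simp
  have hx' : ‖x‖ ≠ 0 := norm_ne_zero_iff.2 hx
  have := hsec v (‖x‖⁻¹ • x) hv (by rw [norm_smul, norm_inv, norm_norm, inv_mul_cancel₀ hx'])
    (by rw [inner_smul_right, hvx, mul_zero])
  simp only [map_smul, LinearMap.smul_apply, smul_eq_mul] at this
  calc ε * ‖x‖ ^ 2 ≤ ‖x‖⁻¹ * (‖x‖⁻¹ * R x v v x) * ‖x‖ ^ 2 := by gcongr
    _ = R x v v x := by field_simp

end AlgebraicCurvatureTensor

open AlgebraicCurvatureTensor in
theorem stmt_0_general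
    {V : Type*} [NormedAddCommGroup V] [InnerProductSpace ℝ V]
    (R : V →ₗ[ℝ] V →ₗ[ℝ] V →ₗ[ℝ] V →ₗ[ℝ] ℝ)
    (hskew : ∀ X Y Z W : V, R X Y Z W = - R Y X Z W)
    (hpair : ∀ X Y Z W : V, R X Y Z W = R Z W X Y)
    (ε : ℝ)
    (hsec : ∀ x y : V, ‖x‖ = 1 → ‖y‖ = 1 → ⟪x, y⟫ = 0 → ε ≤ R y x x y)
    (v w : V) (hv : ‖v‖ = 1) (hw : ‖w‖ = 1) (hvw : ⟪v, w⟫ = 0) :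
    R w v v w = ε ↔ ∀ u : V, R w v v u = ε * ⟪w, u⟫ := by
  set B : V →ₗ[ℝ] V →ₗ[ℝ] ℝ := (R.flip v).flip v - ε • innerₗ V
  have hB : ∀ x y, B x y = R x v v y - ε * ⟪x, y⟫ := fun _ _ => rfl
  constructor
  · intro h u
    have hperp : ∀ z, ⟪v, z⟫ = 0 → B w z = 0 := fun z hvz =>
      LinearMap.apply_eq_zero_of_nonneg_of_apply_self_eq_zero B
        (fun x y => by rw [hB, hB, jacobi_symm hskew hpair, real_inner_comm])
        (by rw [hB, h, real_inner_self_eq_norm_sq, hw]; ring)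
        (fun t => by
          rw [hB, real_inner_self_eq_norm_sq, sub_nonneg]
          exact mul_norm_sq_le_of_inner_eq_zero hsec hv
            (by rw [inner_add_right, inner_smul_right, hvw, hvz]; ring))
    have hBv : B w v = 0 := by
      rw [hB, jacobi_self_eq_zero hskew hpair, real_inner_comm, hvw]; ring
    have hu : u = (u - ⟪v, u⟫ • v) + ⟪v, u⟫ • v := by abel
    have := hperp (u - ⟪v, u⟫ • v) (by
      rw [inner_sub_right, inner_smul_right, real_inner_self_eq_norm_sq, hv]; ring)
    rw [← sub_eq_zero, ← hB, hu, map_add, map_smul, this, hBv, smul_zero, add_zero]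
  · intro h
    rw [h w, real_inner_self_eq_norm_sq, hw]
    ring

/-- For an algebraic curvature tensor `R` on a finite-dimensional real inner
product space with `R(y,x,x,y) ≥ ε` for all orthonormal `x, y`, and orthonormal `v, w`,
`sec(v,w) = ε` iff `w` is an `ε`-eigenvector of the Jacobi operator `𝒥_v`. -/
theorem stmt_0
    {V : Type*} [NormedAddCommGroup V] [InnerProductSpace ℝ V] [FiniteDimensional ℝ V]
    (R : V →ₗ[ℝ] V →ₗ[ℝ] V →ₗ[ℝ] V →ₗ[ℝ] ℝ)
    (hskew : ∀ X Y Z W : V, R X Y Z W = - R Y X Z W)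
    (hpair : ∀ X Y Z W : V, R X Y Z W = R Z W X Y)
    (ε : ℝ)
    (hsec : ∀ x y : V, ‖x‖ = 1 → ‖y‖ = 1 → ⟪x, y⟫ = 0 → ε ≤ R y x x y)
    (v w : V) (hv : ‖v‖ = 1) (hw : ‖w‖ = 1) (hvw : ⟪v, w⟫ = 0) :
    R w v v w = ε ↔ ∀ u : V, R w v v u = ε * ⟪w, u⟫ :=
  stmt_0_general R hskew hpair ε hsec v w hv hw hvw
end

section
/- Let V be a finite-dimensional real inner product space, R an algebraic curvature tensor on V, and ε ∈ ℝ such that R(y,x,x,y) ≥ ε for all orthonormal x,y ∈ V. Suppose v,w ∈ V are orthonormal and R(w,v,v,u) = ε·⟨w,u⟩ for all u ∈ V. Then for every t ∈ ℝ, setting c(t) = cos(t)·v + sin(t)·w and c'(t) = -sin(t)·v + cos(t)·w, one has R(c'(t), c(t), c(t), u) = ε·⟨c'(t), u⟩ for all u ∈ V. -/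
/-!
The plane spanned by `v` and `w` has the minimal sectional curvature `ε`, so `v` is a
minimum of the quadratic form `x ↦ R(w,x,x,w) - ε‖x‖²`, which is nonnegative on `w^⊥`.
A zero of a positive semidefinite form lies in its radical; this is the first variation
`R(v,w,w,u) = ε⟨v,u⟩`, i.e. `v` is an `ε`-eigenvector of `𝒥_w` as well. Since `R(c', c)`
only depends on the oriented plane spanned by `c` and `c'`, which is that of `w` and `v`,
the claim is then the linear combination `cos t · 𝒥_v w - sin t · 𝒥_w v`.
-/

open scoped RealInnerProductSpace

theorem apply_eq_zero_of_nonneg_of_apply_self_eq_zero {E : Type*} [AddCommGroup E] [Module ℝ E]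
    {B : E →ₗ[ℝ] E →ₗ[ℝ] ℝ} (hB : ∀ x y, B x y = B y x) {K : Submodule ℝ E}
    (hK : ∀ x ∈ K, 0 ≤ B x x) {v : E} (hv : v ∈ K) (hvv : B v v = 0) {u : E} (hu : u ∈ K) :
    B v u = 0 := by
  have hquad : ∀ t : ℝ, 0 ≤ B u u * (t * t) + 2 * B v u * t + 0 := fun t => by
    have := hK (v + t • u) (K.add_mem hv (K.smul_mem t hu))
    simp only [map_add, map_smul, LinearMap.add_apply, LinearMap.smul_apply, smul_eq_mul,
      hvv, hB u v] at this
    linarith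
  have := discrim_le_zero hquad
  rw [discrim] at this
  nlinarith [sq_nonneg (B v u)]

section CurvatureTensor

variable {V : Type*} [NormedAddCommGroup V] [InnerProductSpace ℝ V]
  {R : V →ₗ[ℝ] V →ₗ[ℝ] V →ₗ[ℝ] V →ₗ[ℝ] ℝ}

theorem curvature_apply_self_left (hskew : ∀ X Y Z W : V, R X Y Z W = - R Y X Z W)
    (X Z W : V) : R X X Z W = 0 := by
  linarith [hskew X X Z W]

theorem curvature_swap_pairs (hskew : ∀ X Y Z W : V, R X Y Z W = - R Y X Z W)
    (hpair : ∀ X Y Z W : V, R X Y Z W = R Z W X Y) (X Y Z W : V) :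
    R X Y Z W = R Y X W Z := by
  rw [hskew, hpair, hskew, hpair, neg_neg]

theorem curvature_smul_add_smul (hskew : ∀ X Y Z W : V, R X Y Z W = - R Y X Z W)
    (a b c d : ℝ) (v w Z W : V) :
    R (a • v + b • w) (c • v + d • w) Z W = (a * d - b * c) * R v w Z W := by
  simp only [map_add, map_smul, LinearMap.add_apply, LinearMap.smul_apply, smul_eq_mul,
    curvature_apply_self_left hskew, hskew w v]
  ring

theorem mul_norm_sq_le_curvature {ε : ℝ}
    (hsec : ∀ x y : V, ‖x‖ = 1 → ‖y‖ = 1 → ⟪x, y⟫ = 0 → ε ≤ R y x x y)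
    {x y : V} (hxy : ⟪x, y⟫ = 0) : ε * (‖x‖ ^ 2 * ‖y‖ ^ 2) ≤ R y x x y := by
  rcases eq_or_ne x 0 with rfl | hx
  · simp
  rcases eq_or_ne y 0 with rfl | hy
  · simp
  have hx' : ‖x‖ ≠ 0 := norm_ne_zero_iff.mpr hx
  have hy' : ‖y‖ ≠ 0 := norm_ne_zero_iff.mpr hy
  have h := hsec (‖x‖⁻¹ • x) (‖y‖⁻¹ • y) (norm_smul_inv_norm hx) (norm_smul_inv_norm hy)
    (by rw [real_inner_smul_left, real_inner_smul_right, hxy]; ring)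
  simp only [map_smul, LinearMap.smul_apply, smul_eq_mul] at h
  have hpos : 0 < ‖x‖ ^ 2 * ‖y‖ ^ 2 := by positivity
  calc ε * (‖x‖ ^ 2 * ‖y‖ ^ 2)
      ≤ ‖y‖⁻¹ * (‖x‖⁻¹ * (‖x‖⁻¹ * (‖y‖⁻¹ * R y x x y))) * (‖x‖ ^ 2 * ‖y‖ ^ 2) :=
        mul_le_mul_of_nonneg_right h hpos.le
    _ = R y x x y := by field_simp

theorem curvature_jacobi_eq_of_sectional_eq_min {ε : ℝ}
    (hskew : ∀ X Y Z W : V, R X Y Z W = - R Y X Z W)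
    (hpair : ∀ X Y Z W : V, R X Y Z W = R Z W X Y)
    (hsec : ∀ x y : V, ‖x‖ = 1 → ‖y‖ = 1 → ⟪x, y⟫ = 0 → ε ≤ R y x x y)
    {v w : V} (hv : ‖v‖ = 1) (hw : ‖w‖ = 1) (hvw : ⟪v, w⟫ = 0) (hmin : R w v v w = ε)
    (u : V) : R v w w u = ε * ⟪v, u⟫ := by
  -- `B x x = (sec(x, w) - ε) ‖x‖²` on `w^⊥`
  set B : V →ₗ[ℝ] V →ₗ[ℝ] ℝ := (R w).compr₂ (LinearMap.applyₗ w) - ε • innerₗ V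
  have hB : ∀ x y, B x y = R w x y w - ε * ⟪x, y⟫ := fun x y => by simp [B]
  have hperp : ∀ x, x ∈ (ℝ ∙ w)ᗮ ↔ ⟪x, w⟫ = 0 := fun x => by
    rw [Submodule.mem_orthogonal_singleton_iff_inner_left]
  have hBv : ∀ x ∈ (ℝ ∙ w)ᗮ, B v x = 0 := fun x hx =>
    apply_eq_zero_of_nonneg_of_apply_self_eq_zero
      (fun y z => by rw [hB, hB, hpair, curvature_swap_pairs hskew hpair, real_inner_comm])
      (fun y hy => by
        have := mul_norm_sq_le_curvature hsec ((hperp y).1 hy)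
        rw [hw] at this
        rw [hB, real_inner_self_eq_norm_sq]
        linarith)
      ((hperp v).2 hvw) (by rw [hB, hmin, real_inner_self_eq_norm_sq, hv]; ring) hx
  have hBw : B v w = 0 := by
    rw [hB, hvw, hpair, curvature_apply_self_left hskew, mul_zero, sub_zero]
  have hBu : B v u = 0 := by
    have hproj : u - ⟪u, w⟫ • w ∈ (ℝ ∙ w)ᗮ := by
      rw [hperp, inner_sub_left, real_inner_smul_left, real_inner_self_eq_norm_sq, hw]
      ring
    have hsplit : B v u = B v (u - ⟪u, w⟫ • w) + ⟪u, w⟫ * B v w := by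
      rw [map_sub, map_smul, smul_eq_mul]
      ring
    rw [hsplit, hBv _ hproj, hBw, mul_zero, add_zero]
  rw [hB, ← curvature_swap_pairs hskew hpair] at hBu
  linarith

end CurvatureTensor

theorem stmt_2_general
    {V : Type*} [NormedAddCommGroup V] [InnerProductSpace ℝ V]
    (R : V →ₗ[ℝ] V →ₗ[ℝ] V →ₗ[ℝ] V →ₗ[ℝ] ℝ)
    (hskew : ∀ X Y Z W : V, R X Y Z W = - R Y X Z W)
    (hpair : ∀ X Y Z W : V, R X Y Z W = R Z W X Y)
    (ε : ℝ)
    (hsec : ∀ x y : V, ‖x‖ = 1 → ‖y‖ = 1 → ⟪x, y⟫ = 0 → ε ≤ R y x x y)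
    (v w : V) (hv : ‖v‖ = 1) (hw : ‖w‖ = 1) (hvw : ⟪v, w⟫ = 0)
    (heig : ∀ u : V, R w v v u = ε * ⟪w, u⟫) :
    ∀ t : ℝ, ∀ u : V,
      R (-(Real.sin t) • v + Real.cos t • w)
        (Real.cos t • v + Real.sin t • w)
        (Real.cos t • v + Real.sin t • w) u
      = ε * ⟪-(Real.sin t) • v + Real.cos t • w, u⟫ := by
  have hmin : R w v v w = ε := by rw [heig, real_inner_self_eq_norm_sq, hw]; ring
  have hjac := curvature_jacobi_eq_of_sectional_eq_min hskew hpair hsec hv hw hvw hmin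
  intro t u
  rw [curvature_smul_add_smul hskew]
  simp only [map_add, map_smul, LinearMap.add_apply, LinearMap.smul_apply, smul_eq_mul,
    hskew v w v, heig, hjac, inner_add_left, real_inner_smul_left]
  linear_combination (ε * (Real.cos t * ⟪w, u⟫ - Real.sin t * ⟪v, u⟫)) * Real.sin_sq_add_cos_sq t

/-- If `w` is an `ε`-eigenvector of the Jacobi operator `𝒥_v` (with
`sec ≥ ε`), then along the great circle `c(t) = cos t · v + sin t · w` the velocity
`c'(t)` remains an `ε`-eigenvector of `𝒥_{c(t)}`. -/
theorem stmt_2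
    {V : Type*} [NormedAddCommGroup V] [InnerProductSpace ℝ V] [FiniteDimensional ℝ V]
    (R : V →ₗ[ℝ] V →ₗ[ℝ] V →ₗ[ℝ] V →ₗ[ℝ] ℝ)
    (hskew : ∀ X Y Z W : V, R X Y Z W = - R Y X Z W)
    (hpair : ∀ X Y Z W : V, R X Y Z W = R Z W X Y)
    (ε : ℝ)
    (hsec : ∀ x y : V, ‖x‖ = 1 → ‖y‖ = 1 → ⟪x, y⟫ = 0 → ε ≤ R y x x y)
    (v w : V) (hv : ‖v‖ = 1) (hw : ‖w‖ = 1) (hvw : ⟪v, w⟫ = 0)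
    (heig : ∀ u : V, R w v v u = ε * ⟪w, u⟫) :
    ∀ t : ℝ, ∀ u : V,
      R (-(Real.sin t) • v + Real.cos t • w)
        (Real.cos t • v + Real.sin t • w)
        (Real.cos t • v + Real.sin t • w) u
      = ε * ⟪-(Real.sin t) • v + Real.cos t • w, u⟫ :=
  stmt_2_general R hskew hpair ε hsec v w hv hw hvw heig
end

section
/- Let E be a finite-dimensional real inner product space with dim E ≥ 2 and let A : E → E be an invertible skew-adjoint linear map. Then the following are equivalent: (i) there exists r > 0 with A∘A = -r²·id; (ii) for every unit vector v ∈ E, writing u = Av/‖Av‖, the great circle c(t) = cos(t)·v + sin(t)·u satisfies c'(t) = -sin(t)·v + cos(t)·u ∈ span{A(c(t))} for every t ∈ ℝ. -/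
open scoped RealInnerProductSpace

/-- For an invertible skew-adjoint `A` on a real inner product space of
dimension at least 2, `A² = -r²·id` for some `r > 0` iff for every unit vector `v` the
velocity of the great circle through `v` and `u = Av/‖Av‖` stays in the line spanned
by `A` applied to the circle. -/
theorem stmt_3
    {E : Type*} [NormedAddCommGroup E] [InnerProductSpace ℝ E] [FiniteDimensional ℝ E]
    (hdim : 2 ≤ Module.finrank ℝ E)
    (A : E →ₗ[ℝ] E) (hAinv : Function.Bijective A)
    (hAskew : ∀ x y : E, ⟪A x, y⟫ = -⟪x, A y⟫) :
    (∃ r : ℝ, 0 < r ∧ ∀ x : E, A (A x) = -(r ^ 2) • x) ↔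
      (∀ v : E, ‖v‖ = 1 → ∀ t : ℝ,
        (-(Real.sin t) • v + Real.cos t • (‖A v‖⁻¹ • A v)) ∈
          Submodule.span ℝ
            {A (Real.cos t • v + Real.sin t • (‖A v‖⁻¹ • A v))}) := by
  constructor
  · rintro ⟨r, hr, hA2⟩ v hv t
    have hAv2 : ‖A v‖ ^ 2 = r ^ 2 := by
      have h1 : ⟪A v, A v⟫ = r ^ 2 := by
        rw [hAskew v (A v), hA2]
        simp [inner_smul_right, real_inner_self_eq_norm_sq, hv]
      rw [← real_inner_self_eq_norm_sq, h1]
    have hAv : ‖A v‖ = r := by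
      nlinarith [norm_nonneg (A v), hr]
    rw [Submodule.mem_span_singleton]
    refine ⟨r⁻¹, ?_⟩
    rw [map_add, map_smul, map_smul, map_smul, hA2, hAv]
    match_scalars
    all_goals field_simp
    all_goals first | tauto | (left; ring)
  · intro h
    have key : ∀ v : E, ∃ μ : ℝ, A (A v) = μ • v := by
      intro v
      rcases eq_or_ne v 0 with rfl | hv
      · exact ⟨0, by simp⟩
      set w : E := ‖v‖⁻¹ • v with hw
      have hvn : ‖v‖ ≠ 0 := norm_ne_zero_iff.mpr hv
      have hw1 : ‖w‖ = 1 := by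
        rw [hw, norm_smul, norm_inv, norm_norm, inv_mul_cancel₀ hvn]
      have hmem := h w hw1 (Real.pi / 2)
      rw [Real.cos_pi_div_two, Real.sin_pi_div_two] at hmem
      simp only [zero_smul, one_smul, zero_add, add_zero, neg_smul] at hmem
      rw [Submodule.mem_span_singleton] at hmem
      obtain ⟨a, ha⟩ := hmem
      rw [map_smul] at ha
      have hwne : w ≠ 0 := by
        intro h0; rw [h0, norm_zero] at hw1; norm_num at hw1
      have hc : (a * ‖A w‖⁻¹) • A (A w) = -w := by
        rw [mul_smul]; exact ha
      have hcne : a * ‖A w‖⁻¹ ≠ 0 := by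
        intro h0; rw [h0, zero_smul] at hc
        exact hwne (by simpa using hc.symm)
      have hAAw : A (A w) = (-(a * ‖A w‖⁻¹)⁻¹) • w := by
        have := congrArg (fun x => (a * ‖A w‖⁻¹)⁻¹ • x) hc
        simp only [inv_smul_smul₀ hcne] at this
        rw [this, smul_neg, neg_smul]
      refine ⟨-(a * ‖A w‖⁻¹)⁻¹, ?_⟩
      have hv_eq : v = ‖v‖ • w := by
        rw [hw, smul_smul, mul_inv_cancel₀ hvn, one_smul]
      calc A (A v) = ‖v‖ • A (A w) := by
            conv_lhs => rw [hv_eq, map_smul, map_smul]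
        _ = ‖v‖ • ((-(a * ‖A w‖⁻¹)⁻¹) • w) := by rw [hAAw]
        _ = (-(a * ‖A w‖⁻¹)⁻¹) • v := by rw [smul_comm, ← hv_eq]
    have : Nontrivial E := by
      have : 0 < Module.finrank ℝ E := by omega
      exact Module.nontrivial_of_finrank_pos this
    obtain ⟨v₀, hv₀⟩ : ∃ v : E, v ≠ 0 := exists_ne 0
    obtain ⟨μ₀, hμ₀⟩ := key v₀
    have hall : ∀ v : E, A (A v) = μ₀ • v := by
      intro v
      rcases eq_or_ne v 0 with rfl | hv
      · simp
      obtain ⟨μ, hμ⟩ := key v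
      by_cases hdep : ∃ c : ℝ, v = c • v₀
      · obtain ⟨c, rfl⟩ := hdep
        rw [map_smul, map_smul, hμ₀, smul_comm]
      · obtain ⟨ν, hν⟩ := key (v₀ + v)
        rw [map_add, map_add, hμ₀, hμ, smul_add] at hν
        have hlin : (μ₀ - ν) • v₀ + (μ - ν) • v = 0 := by
          have := sub_eq_zero_of_eq hν
          rw [sub_smul, sub_smul]; abel_nf; abel_nf at this
          linear_combination (norm := module) this
        have hμν : μ = ν := by
          by_contra hne
          apply hdep
          refine ⟨-(μ - ν)⁻¹ * (μ₀ - ν), ?_⟩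
          have : (μ - ν) • v = -((μ₀ - ν) • v₀) := by
            linear_combination (norm := module) hlin
          have := congrArg (fun x => (μ - ν)⁻¹ • x) this
          simp only [inv_smul_smul₀ (sub_ne_zero_of_ne hne)] at this
          rw [this]; module
        have hμ₀ν : μ₀ = ν := by
          rw [hμν] at hlin
          simp only [sub_self, zero_smul, add_zero] at hlin
          by_contra hne
          exact hv₀ ((smul_eq_zero.mp hlin).resolve_left (sub_ne_zero_of_ne hne))
        rw [hμ, hμν, ← hμ₀ν]
    have hμ₀neg : μ₀ < 0 := by
      have h1 : ⟪A (A v₀), v₀⟫ = μ₀ * ‖v₀‖ ^ 2 := by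
        rw [hall, real_inner_smul_left, real_inner_self_eq_norm_sq]
      have h2 : ⟪A (A v₀), v₀⟫ = -‖A v₀‖ ^ 2 := by
        rw [hAskew (A v₀) v₀, real_inner_self_eq_norm_sq]
      have hAv₀ : A v₀ ≠ 0 := by
        intro h0
        exact hv₀ (hAinv.injective (by simpa using h0))
      have := h1.symm.trans h2
      have hn : 0 < ‖A v₀‖ ^ 2 := pow_pos (norm_pos_iff.mpr hAv₀) 2
      have hn0 : 0 < ‖v₀‖ ^ 2 := pow_pos (norm_pos_iff.mpr hv₀) 2
      nlinarith
    refine ⟨Real.sqrt (-μ₀), Real.sqrt_pos.mpr (by linarith), ?_⟩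
    intro x
    rw [hall, Real.sq_sqrt (by linarith), neg_neg]
end

section
/- Let d ≥ 3 and let E be a totally geodesic distribution of codimension at most one on the unit sphere S of a d-dimensional real inner product space, with singular set X = {x ∈ S : E_x = x^⊥}. Then X coincides with the intersection of its linear span with S: span(X) ∩ S = X. In particular, X is either empty or a great subsphere of S. -/
open scoped RealInnerProductSpace

/-!
If `x` is singular, every unit vector `w ⊥ x` lies in `E x`, so the great circle through `x`
in direction `w` is tangent to `E`. Every unit `p` lies on such a circle, and reading off the
tangent vector at `p` shows that the component of `x` orthogonal to `p` lies in `E p`. This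
condition is linear in `x`, hence holds for every `y ∈ span X`. For a unit such `y` and a unit
`v ⊥ y` it gives `y ∈ E v`, and the geodesic through `v` in direction `y`, taken at `t = π / 2`,
gives `v ∈ E y`; so `E y = yᗮ`.
-/

theorem Submodule.le_of_forall_norm_eq_one {W : Type*} [NormedAddCommGroup W] [NormedSpace ℝ W]
    {K L : Submodule ℝ W} (h : ∀ v ∈ K, ‖v‖ = 1 → v ∈ L) : K ≤ L := by
  intro v hv
  rcases eq_or_ne v 0 with rfl | hv0
  · exact L.zero_mem
  have hnorm : ‖v‖ ≠ 0 := norm_ne_zero_iff.mpr hv0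
  have hunit : ‖‖v‖⁻¹ • v‖ = 1 := by
    rw [norm_smul, norm_inv, norm_norm, inv_mul_cancel₀ hnorm]
  have hv_eq : v = ‖v‖ • ‖v‖⁻¹ • v := by rw [smul_smul, mul_inv_cancel₀ hnorm, one_smul]
  rw [hv_eq]
  exact L.smul_mem _ (h _ (K.smul_mem _ hv) hunit)

section

variable {V : Type*} [NormedAddCommGroup V] [InnerProductSpace ℝ V]

def IsTotallyGeodesic (E : V → Submodule ℝ V) : Prop :=
  ∀ x : V, ‖x‖ = 1 → ∀ w ∈ E x, ‖w‖ = 1 → ∀ t : ℝ,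
    (-(Real.sin t) • x + Real.cos t • w) ∈ E (Real.cos t • x + Real.sin t • w)

def singularSet (E : V → Submodule ℝ V) : Set V :=
  {x | ‖x‖ = 1 ∧ E x = (ℝ ∙ x)ᗮ}

namespace IsTotallyGeodesic

variable {E : V → Submodule ℝ V} (hE : IsTotallyGeodesic E)
include hE

theorem mem_symm {x w : V} (hx : ‖x‖ = 1) (hw : w ∈ E x) (hw1 : ‖w‖ = 1) : x ∈ E w := by
  have h := hE x hx w hw hw1 (Real.pi / 2)
  simp only [Real.sin_pi_div_two, Real.cos_pi_div_two, zero_smul, one_smul, add_zero,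
    zero_add, neg_smul] at h
  exact (E w).neg_mem_iff.mp h

theorem tangent_mem {x w : V} (hx : ‖x‖ = 1) (hw : w ∈ E x) (hw1 : ‖w‖ = 1) {c s : ℝ}
    (hcs : c ^ 2 + s ^ 2 = 1) (hs : 0 ≤ s) : -s • x + c • w ∈ E (c • x + s • w) := by
  have hc : -1 ≤ c ∧ c ≤ 1 := abs_le.mp (abs_le_one_iff_mul_self_le_one.mpr (by nlinarith))
  have h := hE x hx w hw hw1 (Real.arccos c)
  rwa [Real.cos_arccos hc.1 hc.2, Real.sin_arccos, show 1 - c ^ 2 = s ^ 2 by linarith,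
    Real.sqrt_sq hs] at h

theorem sub_inner_smul_mem_of_mem_singularSet {x p : V} (hx : x ∈ singularSet E)
    (hp : ‖p‖ = 1) : x - ⟪p, x⟫ • p ∈ E p := by
  obtain ⟨hx1, hEx⟩ := hx
  set c := ⟪p, x⟫
  set u := p - c • x with hu_def
  have hxu : ⟪x, u⟫ = 0 := by
    simp [u, c, inner_sub_right, real_inner_smul_right, hx1, real_inner_comm p x]
  have hcu : c ^ 2 + ‖u‖ ^ 2 = 1 := by
    have h := norm_add_sq_eq_norm_sq_add_norm_sq_real
      (show ⟪c • x, u⟫ = 0 by rw [real_inner_smul_left, hxu, mul_zero])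
    rw [show c • x + u = p by rw [hu_def, add_sub_cancel], hp, norm_smul, hx1,
      Real.norm_eq_abs] at h
    simp only [mul_one, abs_mul_abs_self] at h
    linear_combination -h
  rcases eq_or_ne u 0 with hu0 | hu0
  · have hpx : p = c • x := sub_eq_zero.mp hu0
    have hc2 : c * c = 1 := by simpa [hu0, sq] using hcu
    rw [hpx, smul_smul, hc2, one_smul, sub_self]
    exact (E _).zero_mem
  -- `p = c • x + s • w` lies on the great circle from `x` in the direction `w ∈ E x`.
  set s := ‖u‖
  have hs : 0 < s := norm_pos_iff.mpr hu0
  set w := s⁻¹ • u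
  have hw1 : ‖w‖ = 1 := by
    rw [norm_smul, norm_inv, Real.norm_eq_abs, abs_of_pos hs, inv_mul_cancel₀ hs.ne']
  have hwE : w ∈ E x := by
    rw [hEx, Submodule.mem_orthogonal_singleton_iff_inner_right, real_inner_smul_right, hxu,
      mul_zero]
  have hp_eq : c • x + s • w = p := by
    rw [smul_smul, mul_inv_cancel₀ hs.ne', one_smul, hu_def, add_sub_cancel]
  have h := hE.tangent_mem hx1 hwE hw1 hcu hs.le
  rw [hp_eq] at h
  have hx_eq : x - c • p = (-s) • (-s • x + c • w) := by
    rw [← hp_eq, smul_add, smul_add, smul_smul, smul_smul, smul_smul, smul_smul]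
    match_scalars
    · linear_combination -hcu
    · ring
  rw [hx_eq]
  exact (E p).smul_mem _ h

theorem sub_inner_smul_mem_of_mem_span {y p : V} (hy : y ∈ Submodule.span ℝ (singularSet E))
    (hp : ‖p‖ = 1) : y - ⟪p, y⟫ • p ∈ E p := by
  have hspan : Submodule.span ℝ (singularSet E) ≤
      (E p).comap (LinearMap.id - (innerₛₗ ℝ p).smulRight p) :=
    Submodule.span_le.mpr fun x hx => by
      simpa using hE.sub_inner_smul_mem_of_mem_singularSet hx hp
  simpa using hspan hy

theorem orthogonal_le_of_mem_span {y : V} (hy : y ∈ Submodule.span ℝ (singularSet E))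
    (hy1 : ‖y‖ = 1) : (ℝ ∙ y)ᗮ ≤ E y := by
  refine Submodule.le_of_forall_norm_eq_one fun v hv hv1 => hE.mem_symm hv1 ?_ hy1
  have hvy : ⟪v, y⟫ = 0 := Submodule.mem_orthogonal_singleton_iff_inner_left.mp hv
  simpa [hvy] using hE.sub_inner_smul_mem_of_mem_span hy hv1

end IsTotallyGeodesic

end

theorem stmt_4_general
    {V : Type*} [NormedAddCommGroup V] [InnerProductSpace ℝ V]
    (E : V → Submodule ℝ V)
    (hsub : ∀ x : V, ‖x‖ = 1 → E x ≤ (Submodule.span ℝ {x})ᗮ)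
    (htg : ∀ x : V, ‖x‖ = 1 → ∀ w ∈ E x, ‖w‖ = 1 → ∀ t : ℝ,
      (-(Real.sin t) • x + Real.cos t • w) ∈ E (Real.cos t • x + Real.sin t • w)) :
    (↑(Submodule.span ℝ {x : V | ‖x‖ = 1 ∧ E x = (Submodule.span ℝ {x})ᗮ}) ∩
        {y : V | ‖y‖ = 1})
      = {x : V | ‖x‖ = 1 ∧ E x = (Submodule.span ℝ {x})ᗮ} := by
  have hE : IsTotallyGeodesic E := htg
  refine Set.Subset.antisymm ?_ fun x hx => ⟨Submodule.subset_span hx, hx.1⟩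
  rintro y ⟨hy, hy1⟩
  exact ⟨hy1, le_antisymm (hsub y hy1) (hE.orthogonal_le_of_mem_span hy hy1)⟩

/-- The singular set `X` of a totally geodesic distribution of codimension
at most one on the unit sphere of a `d`-dimensional real inner product space (`d ≥ 3`)
satisfies `span(X) ∩ S = X`. -/
theorem stmt_4
    {V : Type*} [NormedAddCommGroup V] [InnerProductSpace ℝ V] [FiniteDimensional ℝ V]
    (d : ℕ) (hd : 3 ≤ d) (hdim : Module.finrank ℝ V = d)
    (E : V → Submodule ℝ V)
    (hsub : ∀ x : V, ‖x‖ = 1 → E x ≤ (Submodule.span ℝ {x})ᗮ)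
    (hcodim : ∀ x : V, ‖x‖ = 1 → d - 2 ≤ Module.finrank ℝ (E x))
    (htg : ∀ x : V, ‖x‖ = 1 → ∀ w ∈ E x, ‖w‖ = 1 → ∀ t : ℝ,
      (-(Real.sin t) • x + Real.cos t • w) ∈ E (Real.cos t • x + Real.sin t • w)) :
    (↑(Submodule.span ℝ {x : V | ‖x‖ = 1 ∧ E x = (Submodule.span ℝ {x})ᗮ}) ∩
        {y : V | ‖y‖ = 1})
      = {x : V | ‖x‖ = 1 ∧ E x = (Submodule.span ℝ {x})ᗮ} :=
  stmt_4_general E hsub htg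
end

section
/- Let d ≥ 3 and let E be a totally geodesic distribution of codimension at most one on the unit sphere S of a d-dimensional real inner product space, and suppose E_x ≠ x^⊥ for at least one x ∈ S. Then the singular set X = {x ∈ S : E_x = x^⊥} does not contain d linearly independent vectors; i.e., X contains no basis of the ambient space. -/
open scoped RealInnerProductSpace

lemma singular_proj_mem
    {V : Type*} [NormedAddCommGroup V] [InnerProductSpace ℝ V]
    (E : V → Submodule ℝ V)
    (htg : ∀ x : V, ‖x‖ = 1 → ∀ w ∈ E x, ‖w‖ = 1 → ∀ t : ℝ,
      (-(Real.sin t) • x + Real.cos t • w) ∈ E (Real.cos t • x + Real.sin t • w))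
    (x y : V) (hx : ‖x‖ = 1) (hy : ‖y‖ = 1)
    (hEx : E x = (Submodule.span ℝ {x})ᗮ) :
    x - ⟪x, y⟫ • y ∈ E y := by
  set c : ℝ := ⟪x, y⟫ with hc
  by_cases h0 : x - c • y = 0
  · rw [h0]; exact (E y).zero_mem
  -- compute ‖x - c•y‖² = 1 - c²
  have hxx : ⟪x, x⟫ = 1 := by
    rw [real_inner_self_eq_norm_mul_norm, hx]; norm_num
  have hyy : ⟪y, y⟫ = 1 := by
    rw [real_inner_self_eq_norm_mul_norm, hy]; norm_num
  have hyx : ⟪y, x⟫ = c := by rw [hc, real_inner_comm]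
  have hnormsq : ‖y - c • x‖ ^ 2 = 1 - c ^ 2 := by
    rw [norm_sub_sq_real, real_inner_smul_right, norm_smul, hx, hy, hyx]
    simp [Real.norm_eq_abs, mul_pow, sq_abs]
    ring
  have hpos : 0 < 1 - c ^ 2 := by
    have h1 : ‖x - c • y‖ ^ 2 = 1 - c ^ 2 := by
      rw [norm_sub_sq_real, real_inner_smul_right, norm_smul, hx, hy, ← hc]
      simp [Real.norm_eq_abs, mul_pow, sq_abs]
      ring
    rw [← h1]
    exact pow_pos (norm_pos_iff.mpr h0) 2
  set s : ℝ := Real.sqrt (1 - c ^ 2) with hsdef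
  have hs0 : 0 < s := Real.sqrt_pos.2 hpos
  have hs2 : s ^ 2 = 1 - c ^ 2 := Real.sq_sqrt hpos.le
  set t : ℝ := Real.arccos c with ht
  have hcost : Real.cos t = c := by
    apply Real.cos_arccos
    · nlinarith
    · nlinarith
  have hsint : Real.sin t = s := by
    rw [ht, Real.sin_arccos, hsdef]
  set w : V := s⁻¹ • (y - c • x) with hw
  have hxw : ⟪x, w⟫ = 0 := by
    rw [hw, real_inner_smul_right, inner_sub_right, real_inner_smul_right, hxx, hc]
    ring
  have hwE : w ∈ E x := by
    rw [hEx]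
    exact Submodule.mem_orthogonal_singleton_iff_inner_right.2 hxw
  have hwnorm : ‖w‖ = 1 := by
    have hn : ‖y - c • x‖ = s := by
      have := hnormsq
      nlinarith [norm_nonneg (y - c • x)]
    rw [hw, norm_smul, hn, Real.norm_eq_abs, abs_inv, abs_of_pos hs0,
      inv_mul_cancel₀ hs0.ne']
  have key := htg x hx w hwE hwnorm t
  have hpt : Real.cos t • x + Real.sin t • w = y := by
    rw [hcost, hsint, hw, smul_smul, mul_inv_cancel₀ hs0.ne', one_smul]
    abel
  have hvec : -(Real.sin t) • x + Real.cos t • w = s⁻¹ • ((c • y) - x) := by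
    rw [hcost, hsint, hw]
    match_scalars <;> field_simp <;> nlinarith
  rw [hpt, hvec] at key
  have := (E y).smul_mem (-s) key
  have heq : (-s) • (s⁻¹ • ((c • y) - x)) = x - c • y := by
    have hm : -s * s⁻¹ = -1 := by field_simp
    rw [smul_smul, hm, neg_one_smul, neg_sub]
  rwa [heq] at this

/-- If a totally geodesic distribution of codimension at most one on the
unit sphere of a `d`-dimensional real inner product space (`d ≥ 3`) is nontrivial at
some point, then its singular set contains no basis of the ambient space, i.e. no
`d` linearly independent vectors. -/
theorem stmt_5
    {V : Type*} [NormedAddCommGroup V] [InnerProductSpace ℝ V] [FiniteDimensional ℝ V]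
    (d : ℕ) (hd : 3 ≤ d) (hdim : Module.finrank ℝ V = d)
    (E : V → Submodule ℝ V)
    (hsub : ∀ x : V, ‖x‖ = 1 → E x ≤ (Submodule.span ℝ {x})ᗮ)
    (hcodim : ∀ x : V, ‖x‖ = 1 → d - 2 ≤ Module.finrank ℝ (E x))
    (htg : ∀ x : V, ‖x‖ = 1 → ∀ w ∈ E x, ‖w‖ = 1 → ∀ t : ℝ,
      (-(Real.sin t) • x + Real.cos t • w) ∈ E (Real.cos t • x + Real.sin t • w))
    (hnontriv : ∃ x : V, ‖x‖ = 1 ∧ E x ≠ (Submodule.span ℝ {x})ᗮ) :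
    ∀ f : Fin d → V,
      (∀ i, ‖f i‖ = 1 ∧ E (f i) = (Submodule.span ℝ {f i})ᗮ) →
      ¬ LinearIndependent ℝ f := by
  intro f hf hli
  obtain ⟨y, hy, hEy⟩ := hnontriv
  apply hEy
  refine le_antisymm (hsub y hy) ?_
  intro u hu
  have huy : ⟪y, u⟫ = 0 := Submodule.mem_orthogonal_singleton_iff_inner_right.1 hu
  -- f spans V
  have hspan : Submodule.span ℝ (Set.range f) = ⊤ := by
    have : Nonempty (Fin d) := ⟨⟨0, by omega⟩⟩
    exact hli.span_eq_top_of_card_eq_finrank (by simp [hdim])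
  have humem : u ∈ Submodule.span ℝ (Set.range f) := by rw [hspan]; trivial
  obtain ⟨c, hcu⟩ := (Finsupp.mem_span_range_iff_exists_finsupp).1 humem
  -- each projected vector lies in E y
  have hmem : ∀ i, f i - ⟪f i, y⟫ • y ∈ E y := fun i =>
    singular_proj_mem E htg (f i) y (hf i).1 hy (hf i).2
  have hsum : (c.sum fun i a => a • (f i - ⟪f i, y⟫ • y)) = u := by
    have h1 : (c.sum fun i a => a • (f i - ⟪f i, y⟫ • y))
        = (c.sum fun i a => a • f i) - (c.sum fun i a => (a * ⟪f i, y⟫) • y) := by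
      rw [← Finsupp.sum_sub]
      congr 1; ext i a
      rw [smul_sub, smul_smul]
    have h2 : (c.sum fun i a => (a * ⟪f i, y⟫) • y)
        = (c.sum fun i a => a * ⟪f i, y⟫) • y := by
      simp [Finsupp.sum, Finset.sum_smul]
    have h3 : (c.sum fun i a => a * ⟪f i, y⟫) = ⟪u, y⟫ := by
      rw [← hcu, Finsupp.sum, Finsupp.sum, sum_inner]
      exact Finset.sum_congr rfl fun i _ => by rw [real_inner_smul_left]
    rw [h1, h2, h3, real_inner_comm, huy, zero_smul, sub_zero, hcu]
  rw [← hsum]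
  exact Submodule.sum_mem _ fun i _ => (E y).smul_mem _ (hmem i)
end

section
/- Let d ≥ 3, let E be a totally geodesic distribution of codimension at most one on the unit sphere S of a d-dimensional real inner product space, let T be a set, and let f : S → T be a function such that f(cos(t)x + sin(t)w) = f(x) for every x ∈ S, every unit vector w ∈ E_x, and every t ∈ ℝ. Then f is constant. -/
open scoped RealInnerProductSpace

/-- A function on the unit sphere of a `d`-dimensional real inner product
space (`d ≥ 3`) that is constant along every great circle tangent to a totally geodesic
distribution of codimension at most one is constant. -/
theorem stmt_6
    {V : Type*} [NormedAddCommGroup V] [InnerProductSpace ℝ V] [FiniteDimensional ℝ V]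
    (d : ℕ) (hd : 3 ≤ d) (hdim : Module.finrank ℝ V = d)
    (E : V → Submodule ℝ V)
    (hsub : ∀ x : V, ‖x‖ = 1 → E x ≤ (Submodule.span ℝ {x})ᗮ)
    (hcodim : ∀ x : V, ‖x‖ = 1 → d - 2 ≤ Module.finrank ℝ (E x))
    (htg : ∀ x : V, ‖x‖ = 1 → ∀ w ∈ E x, ‖w‖ = 1 → ∀ t : ℝ,
      (-(Real.sin t) • x + Real.cos t • w) ∈ E (Real.cos t • x + Real.sin t • w))
    {T : Type*} (f : V → T)
    (hconst : ∀ x : V, ‖x‖ = 1 → ∀ w ∈ E x, ‖w‖ = 1 → ∀ t : ℝ,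
      f (Real.cos t • x + Real.sin t • w) = f x) :
    ∀ x y : V, ‖x‖ = 1 → ‖y‖ = 1 → f x = f y := by
  -- `E x` contains a unit vector
  have hEx_unit : ∀ x : V, ‖x‖ = 1 → ∃ w ∈ E x, ‖w‖ = 1 := by
    intro x hx
    have h1 : 0 < Module.finrank ℝ (E x) := lt_of_lt_of_le (by omega) (hcodim x hx)
    have : E x ≠ ⊥ := by
      intro hbot
      rw [hbot] at h1
      simp at h1
    obtain ⟨v, hv, hv0⟩ := Submodule.exists_mem_ne_zero_of_ne_bot this
    exact ⟨‖v‖⁻¹ • v, (E x).smul_mem _ hv, norm_smul_inv_norm hv0⟩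
  -- key : f is constant on the unit sphere of span{x} ⊔ E x
  have key : ∀ x z : V, ‖x‖ = 1 → ‖z‖ = 1 →
      z ∈ (Submodule.span ℝ {x}) ⊔ E x → f z = f x := by
    intro x z hx hz hzW
    obtain ⟨u, hu, v, hv, huv⟩ := Submodule.mem_sup.mp hzW
    obtain ⟨c, rfl⟩ := Submodule.mem_span_singleton.mp hu
    have hxv : ⟪x, v⟫ = 0 :=
      (Submodule.mem_orthogonal _ _).mp (hsub x hx hv) x (Submodule.mem_span_singleton_self x)
    have hnorm : c ^ 2 + ‖v‖ ^ 2 = 1 := by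
      have h1 : ‖c • x + v‖ ^ 2 = ‖c • x‖ ^ 2 + 2 * ⟪c • x, v⟫ + ‖v‖ ^ 2 :=
        norm_add_sq_real _ _
      rw [huv] at h1
      rw [hz, real_inner_smul_left, hxv, norm_smul, hx] at h1
      simp at h1
      nlinarith [h1]
    rcases eq_or_ne v 0 with hv0 | hv0
    · subst huv
      -- z = c • x with c = ±1
      have hc2 : c ^ 2 = 1 := by
        rw [hv0] at hnorm; simpa using hnorm
      have hc : (c - 1) * (c + 1) = 0 := by nlinarith
      rcases mul_eq_zero.mp hc with h1 | h1
      · have : c = 1 := by linarith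
        rw [hv0, this, one_smul, add_zero]
      · have hc1 : c = -1 := by linarith
        obtain ⟨w, hw, hw1⟩ := hEx_unit x hx
        have h2 := hconst x hx w hw hw1 Real.pi
        rw [Real.cos_pi, Real.sin_pi, zero_smul, add_zero] at h2
        rw [hv0, add_zero, hc1]
        exact h2
    · have hvle : ‖v‖ ≤ 1 := by nlinarith [norm_nonneg v, sq_nonneg c]
      have hc1 : c ≤ 1 := by nlinarith [norm_nonneg v]
      have hcm1 : -1 ≤ c := by nlinarith [norm_nonneg v]
      have hw1 : ‖‖v‖⁻¹ • v‖ = 1 := norm_smul_inv_norm hv0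
      have hwmem : ‖v‖⁻¹ • v ∈ E x := (E x).smul_mem _ hv
      have := hconst x hx _ hwmem hw1 (Real.arccos c)
      rw [Real.cos_arccos hcm1 hc1, Real.sin_arccos] at this
      have hs : Real.sqrt (1 - c ^ 2) = ‖v‖ := by
        rw [show 1 - c ^ 2 = ‖v‖ ^ 2 by linarith]
        exact Real.sqrt_sq (norm_nonneg v)
      rw [hs, smul_smul, mul_inv_cancel₀ (norm_ne_zero_iff.mpr hv0), one_smul, huv] at this
      exact this
  -- main argument
  intro x y hx hy
  have hx0 : x ≠ 0 := by intro h; rw [h] at hx; simp at hx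
  have hy0 : y ≠ 0 := by intro h; rw [h] at hy; simp at hy
  set Wx := (Submodule.span ℝ {x}) ⊔ E x with hWx
  set Wy := (Submodule.span ℝ {y}) ⊔ E y with hWy
  have hdimW : ∀ p : V, ‖p‖ = 1 → p ≠ 0 →
      d - 1 ≤ Module.finrank ℝ (((Submodule.span ℝ {p}) ⊔ E p : Submodule ℝ V)) := by
    intro p hp hp0
    have hinf : (Submodule.span ℝ {p}) ⊓ E p = ⊥ := by
      rw [Submodule.eq_bot_iff]
      rintro q ⟨hq1, hq2⟩
      obtain ⟨c, rfl⟩ := Submodule.mem_span_singleton.mp hq1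
      have hcc : c = 0 := by
        have h := (Submodule.mem_orthogonal _ _).mp (hsub p hp hq2) p
          (Submodule.mem_span_singleton_self p)
        rw [real_inner_smul_right, real_inner_self_eq_norm_sq, hp] at h
        simpa using h
      rw [hcc, zero_smul]
    have := Submodule.finrank_sup_add_finrank_inf_eq (Submodule.span ℝ {p}) (E p)
    rw [hinf, finrank_span_singleton hp0] at this
    simp at this
    have hE := hcodim p hp
    omega
  have hWxd : d - 1 ≤ Module.finrank ℝ Wx := hdimW x hx hx0
  have hWyd : d - 1 ≤ Module.finrank ℝ Wy := hdimW y hy hy0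
  have hsup : Module.finrank ℝ ((Wx ⊔ Wy : Submodule ℝ V)) ≤ d := hdim ▸ Submodule.finrank_le _
  have hinfd : 0 < Module.finrank ℝ ((Wx ⊓ Wy : Submodule ℝ V)) := by
    have := Submodule.finrank_sup_add_finrank_inf_eq Wx Wy
    omega
  have hne : Wx ⊓ Wy ≠ ⊥ := by
    intro hbot
    rw [hbot] at hinfd
    simp at hinfd
  obtain ⟨z0, hz0mem, hz00⟩ := Submodule.exists_mem_ne_zero_of_ne_bot hne
  set z := ‖z0‖⁻¹ • z0 with hzdef
  have hz1 : ‖z‖ = 1 := norm_smul_inv_norm hz00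
  have hzmem : z ∈ Wx ⊓ Wy := (Wx ⊓ Wy).smul_mem _ hz0mem
  have h1 := key x z hx hz1 hzmem.1
  have h2 := key y z hy hz1 hzmem.2
  rw [← h1, h2]
end

section
/- Under the setup and curvature-one condition described in the context, let v1 ∈ σ1 and v2 ∈ σ2 be unit vectors and let a,b ∈ ℝ with a² + b² = 1. Then the unit vector v = a·v1 + b·v2 satisfies R(v, Av, Av, v)/‖Av‖² = a²·λ1 + b²·λ2. -/
open scoped RealInnerProductSpace

/-!
Expand `R(v, Av, Av, v)` multilinearly in `v = a v1 + b v2`, `Av = a Av1 + b Av2`. The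
curvature-one condition evaluates every term in which a vector of one plane meets a direction
in the other, leaving `a⁴λ1μ1² + b⁴λ2μ2² + a²b²(μ1² + μ2² + 2M)`, where `M` is the mixed term
`R(Av1, v1, v2, Av2) + R(Av1, v2, v1, Av2)`. Applying the condition once more at `v1 + v2`,
against the vector `μ2² Av1 - μ1² Av2` of the plane `span {Av1, Av2}` orthogonal to
`A(v1 + v2)`, gives `M = μ2²(λ1 - 1)` and, symmetrically, `M = μ1²(λ2 - 1)`. Substituting, the
numerator becomes `(a²λ1 + b²λ2) ‖Av‖²`.
-/

section

variable {V : Type*} [NormedAddCommGroup V] [InnerProductSpace ℝ V]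
  {R : V →ₗ[ℝ] V →ₗ[ℝ] V →ₗ[ℝ] V →ₗ[ℝ] ℝ} {A : V →ₗ[ℝ] V}

theorem curvature_apply_reverse (hskew : ∀ X Y Z W : V, R X Y Z W = - R Y X Z W)
    (hpair : ∀ X Y Z W : V, R X Y Z W = R Z W X Y) (X Y Z W : V) :
    R X Y Z W = R W Z Y X := by
  rw [hskew, hpair, hskew, neg_neg]

def IsCurvatureOneOn (R : V →ₗ[ℝ] V →ₗ[ℝ] V →ₗ[ℝ] V →ₗ[ℝ] ℝ) (A : V →ₗ[ℝ] V)
    (W : Submodule ℝ V) : Prop :=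
  ∀ v ∈ W, ‖v‖ = 1 → ∀ w ∈ W, ⟪w, v⟫ = 0 → ⟪w, A v⟫ = 0 → ∀ u ∈ W, R w v v u = ⟪w, u⟫

theorem IsCurvatureOneOn.apply_of_inner_eq_zero {W : Submodule ℝ V}
    (h : IsCurvatureOneOn R A W) {v w u : V} (hv : v ∈ W) (hw : w ∈ W) (hu : u ∈ W)
    (hwv : ⟪w, v⟫ = 0) (hwAv : ⟪w, A v⟫ = 0) :
    R w v v u = ‖v‖ ^ 2 * ⟪w, u⟫ := by
  rcases eq_or_ne v 0 with rfl | hv0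
  · simp
  have hn : ‖v‖ ≠ 0 := norm_ne_zero_iff.mpr hv0
  have hunit := h (‖v‖⁻¹ • v) (W.smul_mem _ hv) (by simp [norm_smul, hn]) w hw
    (by simp [inner_smul_right, hwv]) (by simp [inner_smul_right, hwAv]) u hu
  simp only [map_smul, LinearMap.smul_apply, smul_eq_mul] at hunit
  field_simp at hunit
  linear_combination hunit

theorem IsCurvatureOneOn.apply_of_isOrtho {W σ τ : Submodule ℝ V}
    (h : IsCurvatureOneOn R A W) (hσ : σ ≤ W) (hτ : τ ≤ W) (horth : σ ⟂ τ)
    (hA : Set.MapsTo A σ σ) ⦃x y u : V⦄ (hx : x ∈ σ) (hy : y ∈ τ) (hu : u ∈ W) :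
    R y x x u = ‖x‖ ^ 2 * ⟪y, u⟫ :=
  h.apply_of_inner_eq_zero (hσ hx) (hτ hy) hu (horth.symm.inner_eq hy hx)
    (horth.symm.inner_eq hy (hA hx))

def mixedCurvature (R : V →ₗ[ℝ] V →ₗ[ℝ] V →ₗ[ℝ] V →ₗ[ℝ] ℝ) (A : V →ₗ[ℝ] V) (x y : V) : ℝ :=
  R (A x) x y (A y) + R (A x) y x (A y)

theorem mixedCurvature_comm (hskew : ∀ X Y Z W : V, R X Y Z W = - R Y X Z W)
    (hpair : ∀ X Y Z W : V, R X Y Z W = R Z W X Y) (x y : V) :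
    mixedCurvature R A x y = mixedCurvature R A y x := by
  rw [mixedCurvature, mixedCurvature, curvature_apply_reverse hskew hpair (A x) x y,
    curvature_apply_reverse hskew hpair (A x) y x, add_comm]

theorem inner_apply_self_eq_zero_of_skew (hAskew : ∀ x y : V, ⟪A x, y⟫ = -⟪x, A y⟫) (x : V) :
    ⟪A x, x⟫ = 0 := by
  linarith [hAskew x x, real_inner_comm x (A x)]

theorem mul_mixedCurvature_eq {σ τ : Submodule ℝ V}
    (hskew : ∀ X Y Z W : V, R X Y Z W = - R Y X Z W)
    (hpair : ∀ X Y Z W : V, R X Y Z W = R Z W X Y)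
    (hAskew : ∀ x y : V, ⟪A x, y⟫ = -⟪x, A y⟫)
    (h : IsCurvatureOneOn R A (σ ⊔ τ)) (horth : σ ⟂ τ)
    (hAσ : Set.MapsTo A σ σ) (hAτ : Set.MapsTo A τ τ) {x y : V} (hx : x ∈ σ) (hy : y ∈ τ) :
    ‖A x‖ ^ 2 * mixedCurvature R A x y
      = ‖A y‖ ^ 2 * (R x (A x) (A x) x - ‖x‖ ^ 2 * ‖A x‖ ^ 2) := by
  have hAx := hAσ hx
  have hAy := hAτ hy
  have cσ := h.apply_of_isOrtho le_sup_left le_sup_right horth hAσ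
  have cτ := h.apply_of_isOrtho le_sup_right le_sup_left horth.symm hAτ
  have hxy : ⟪x, y⟫ = 0 := horth.inner_eq hx hy
  have hAxAy : ⟪A x, A y⟫ = 0 := horth.inner_eq hAx hAy
  have rev := curvature_apply_reverse hskew hpair
  have hsum : ‖x + y‖ ^ 2 = ‖x‖ ^ 2 + ‖y‖ ^ 2 := by rw [norm_add_sq_real, hxy]; ring
  -- the curvature-one condition at `x + y`, tested against the vector of `span {A x, A y}`
  -- orthogonal to `A (x + y)`
  have key := h.apply_of_inner_eq_zero (v := x + y) (w := ‖A y‖ ^ 2 • A x - ‖A x‖ ^ 2 • A y)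
    (u := A x) (add_mem (Submodule.mem_sup_left hx) (Submodule.mem_sup_right hy))
    (sub_mem (Submodule.smul_mem _ _ (Submodule.mem_sup_left hAx))
      (Submodule.smul_mem _ _ (Submodule.mem_sup_right hAy))) (Submodule.mem_sup_left hAx)
    (by simp only [inner_sub_left, inner_add_right, real_inner_smul_left,
          inner_apply_self_eq_zero_of_skew hAskew, horth.inner_eq hAx hy,
          real_inner_comm x (A y), horth.inner_eq hx hAy]; ring)
    (by simp only [map_add, inner_sub_left, inner_add_right, real_inner_smul_left,
          real_inner_self_eq_norm_sq, hAxAy, real_inner_comm (A x) (A y)]; ring)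
  rw [rev] at key
  simp only [map_add, map_sub, map_smul, LinearMap.add_apply, smul_eq_mul, inner_sub_left,
    real_inner_smul_left, real_inner_self_eq_norm_sq, real_inner_comm (A x) (A y), hAxAy,
    hsum] at key
  have XyxX : R (A x) y x (A x) = 0 := by
    rw [hpair, rev, cσ hAx hy (Submodule.mem_sup_left hx), real_inner_comm, hxy, mul_zero]
  have XxyX : R (A x) x y (A x) = 0 := by rw [rev, XyxX]
  have XyyX : R (A x) y y (A x) = ‖y‖ ^ 2 * ‖A x‖ ^ 2 := by
    rw [cτ hy hAx (Submodule.mem_sup_left hAx), real_inner_self_eq_norm_sq]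
  have XxxY : R (A x) x x (A y) = 0 := by
    rw [rev, cσ hx hAy (Submodule.mem_sup_left hAx), real_inner_comm, hAxAy, mul_zero]
  have XyyY : R (A x) y y (A y) = 0 := by
    rw [cτ hy hAx (Submodule.mem_sup_right hAy), hAxAy, mul_zero]
  rw [hpair (A x) x x (A x), XyxX, XxyX, XyyX, XxxY, XyyY] at key
  rw [mixedCurvature]
  linear_combination -key

theorem curvature_smul_add_smul_s7 {σ τ : Submodule ℝ V}
    (hskew : ∀ X Y Z W : V, R X Y Z W = - R Y X Z W)
    (hpair : ∀ X Y Z W : V, R X Y Z W = R Z W X Y)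
    (h : IsCurvatureOneOn R A (σ ⊔ τ)) (horth : σ ⟂ τ)
    (hAσ : Set.MapsTo A σ σ) (hAτ : Set.MapsTo A τ τ) {x y : V} (hx : x ∈ σ) (hy : y ∈ τ)
    (a b : ℝ) :
    R (a • x + b • y) (A (a • x + b • y)) (A (a • x + b • y)) (a • x + b • y)
      = a ^ 4 * R x (A x) (A x) x + b ^ 4 * R y (A y) (A y) y
        + a ^ 2 * b ^ 2 * (‖x‖ ^ 2 * ‖A y‖ ^ 2 + ‖y‖ ^ 2 * ‖A x‖ ^ 2
          + 2 * mixedCurvature R A x y) := by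
  have hAx := hAσ hx
  have hAy := hAτ hy
  have cσ := h.apply_of_isOrtho le_sup_left le_sup_right horth hAσ
  have cτ := h.apply_of_isOrtho le_sup_right le_sup_left horth.symm hAτ
  have mx : x ∈ σ ⊔ τ := Submodule.mem_sup_left hx
  have my : y ∈ σ ⊔ τ := Submodule.mem_sup_right hy
  have hxy : ⟪x, y⟫ = 0 := horth.inner_eq hx hy
  have hAxAy : ⟪A x, A y⟫ = 0 := horth.inner_eq hAx hAy
  have rev := curvature_apply_reverse hskew hpair
  have xYYx : R x (A y) (A y) x = ‖A y‖ ^ 2 * ‖x‖ ^ 2 := by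
    rw [cτ hAy hx mx, real_inner_self_eq_norm_sq]
  have yXXy : R y (A x) (A x) y = ‖A x‖ ^ 2 * ‖y‖ ^ 2 := by
    rw [cσ hAx hy my, real_inner_self_eq_norm_sq]
  have yXXx : R y (A x) (A x) x = 0 := by rw [cσ hAx hy mx, real_inner_comm, hxy, mul_zero]
  have xYYy : R x (A y) (A y) y = 0 := by rw [cτ hAy hx my, hxy, mul_zero]
  have xXYx : R x (A x) (A y) x = 0 := by
    rw [hpair, cσ hx hAy (Submodule.mem_sup_left hAx), real_inner_comm, hAxAy, mul_zero]
  have yYXy : R y (A y) (A x) y = 0 := by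
    rw [hpair, cτ hy hAx (Submodule.mem_sup_right hAy), hAxAy, mul_zero]
  have xXYy : R x (A x) (A y) y = R (A x) x y (A y) := by rw [hpair, rev]
  have yXYx : R y (A x) (A y) x = R (A x) y x (A y) := by rw [hpair, rev]
  simp only [map_add, map_smul, LinearMap.add_apply, LinearMap.smul_apply, smul_eq_mul]
  rw [rev x (A x) (A x) y, rev y (A y) (A y) x, rev x (A y) (A x) x, rev y (A x) (A y) y,
    xYYx, yXXy, yXXx, xYYy, xXYx, yYXy, xXYy, yXYx, hpair y (A y) (A x) x,
    hpair x (A y) (A x) y, mixedCurvature]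
  ring

theorem norm_smul_add_smul_sq_of_inner_eq_zero {x y : V} (h : ⟪x, y⟫ = 0) (a b : ℝ) :
    ‖a • x + b • y‖ ^ 2 = a ^ 2 * ‖x‖ ^ 2 + b ^ 2 * ‖y‖ ^ 2 := by
  rw [norm_add_sq_real, norm_smul, norm_smul, real_inner_smul_left, real_inner_smul_right, h,
    mul_pow, mul_pow, Real.norm_eq_abs, Real.norm_eq_abs, sq_abs, sq_abs]
  ring

end

theorem stmt_7_general
    {V : Type*} [NormedAddCommGroup V] [InnerProductSpace ℝ V]
    (R : V →ₗ[ℝ] V →ₗ[ℝ] V →ₗ[ℝ] V →ₗ[ℝ] ℝ)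
    (hskew : ∀ X Y Z W : V, R X Y Z W = - R Y X Z W)
    (hpair : ∀ X Y Z W : V, R X Y Z W = R Z W X Y)
    (σ1 σ2 : Submodule ℝ V)
    (horth : ∀ x ∈ σ1, ∀ y ∈ σ2, ⟪x, y⟫ = 0)
    (A : V →ₗ[ℝ] V)
    (hAskew : ∀ x y : V, ⟪A x, y⟫ = -⟪x, A y⟫)
    (hA1 : Submodule.map A σ1 = σ1) (hA2 : Submodule.map A σ2 = σ2)
    (μ1 μ2 : ℝ) (hμ1 : 0 < μ1) (hμ2 : 0 < μ2)
    (hAμ1 : ∀ x ∈ σ1, ‖A x‖ = μ1 * ‖x‖) (hAμ2 : ∀ x ∈ σ2, ‖A x‖ = μ2 * ‖x‖)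
    (lam1 lam2 : ℝ)
    (hlam1 : ∀ x ∈ σ1, ‖x‖ = 1 → R x (A x) (A x) x = lam1 * μ1 ^ 2)
    (hlam2 : ∀ x ∈ σ2, ‖x‖ = 1 → R x (A x) (A x) x = lam2 * μ2 ^ 2)
    (hcvc : ∀ v ∈ σ1 ⊔ σ2, ‖v‖ = 1 → ∀ w ∈ σ1 ⊔ σ2, ⟪w, v⟫ = 0 → ⟪w, A v⟫ = 0 →
      ∀ u ∈ σ1 ⊔ σ2, R w v v u = ⟪w, u⟫)
    (v1 : V) (hv1 : v1 ∈ σ1) (hv1u : ‖v1‖ = 1)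
    (v2 : V) (hv2 : v2 ∈ σ2) (hv2u : ‖v2‖ = 1)
    (a b : ℝ) (hab : a ^ 2 + b ^ 2 = 1) :
    R (a • v1 + b • v2) (A (a • v1 + b • v2)) (A (a • v1 + b • v2)) (a • v1 + b • v2)
        / ‖A (a • v1 + b • v2)‖ ^ 2
      = a ^ 2 * lam1 + b ^ 2 * lam2 := by
  have horth' : σ1 ⟂ σ2 := Submodule.isOrtho_iff_inner_eq.mpr horth
  have hAσ1 : Set.MapsTo A σ1 σ1 := fun x hx => hA1 ▸ Submodule.mem_map_of_mem hx
  have hAσ2 : Set.MapsTo A σ2 σ2 := fun x hx => hA2 ▸ Submodule.mem_map_of_mem hx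
  have hAv1 : ‖A v1‖ = μ1 := by rw [hAμ1 v1 hv1, hv1u, mul_one]
  have hAv2 : ‖A v2‖ = μ2 := by rw [hAμ2 v2 hv2, hv2u, mul_one]
  have hM1 : mixedCurvature R A v1 v2 = μ2 ^ 2 * (lam1 - 1) := by
    have h := mul_mixedCurvature_eq hskew hpair hAskew hcvc horth' hAσ1 hAσ2 hv1 hv2
    rw [hAv1, hAv2, hv1u, hlam1 v1 hv1 hv1u] at h
    exact mul_left_cancel₀ (pow_ne_zero 2 hμ1.ne') (by linear_combination h)
  have hM2 : mixedCurvature R A v1 v2 = μ1 ^ 2 * (lam2 - 1) := by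
    have h := mul_mixedCurvature_eq hskew hpair hAskew (sup_comm σ1 σ2 ▸ hcvc) horth'.symm
      hAσ2 hAσ1 hv2 hv1
    rw [mixedCurvature_comm hskew hpair, hAv1, hAv2, hv2u, hlam2 v2 hv2 hv2u] at h
    exact mul_left_cancel₀ (pow_ne_zero 2 hμ2.ne') (by linear_combination h)
  -- `(μ1² + μ2²)(a²μ1² + b²μ2²) = μ1²μ2² + μ1⁴a² + μ2⁴b²` since `a² + b² = 1`
  have hD : 0 < a ^ 2 * μ1 ^ 2 + b ^ 2 * μ2 ^ 2 := by
    nlinarith [mul_pos (pow_pos hμ1 2) (pow_pos hμ2 2),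
      mul_nonneg (sq_nonneg a) (pow_pos hμ1 4).le, mul_nonneg (sq_nonneg b) (pow_pos hμ2 4).le]
  rw [curvature_smul_add_smul_s7 hskew hpair hcvc horth' hAσ1 hAσ2 hv1 hv2, map_add, map_smul,
    map_smul, norm_smul_add_smul_sq_of_inner_eq_zero (horth'.inner_eq (hAσ1 hv1) (hAσ2 hv2)),
    hlam1 v1 hv1 hv1u, hlam2 v2 hv2 hv2u, hv1u, hv2u, hAv1, hAv2, div_eq_iff hD.ne']
  linear_combination (a ^ 2 * b ^ 2) * (hM1 + hM2)

/-- In the two-invariant-planes setup with the curvature-one condition on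
`W = σ1 ⊕ σ2`, a unit vector `v = a·v1 + b·v2` (with `v1 ∈ σ1`, `v2 ∈ σ2` unit and
`a² + b² = 1`) satisfies `λ(v) = R(v,Av,Av,v)/‖Av‖² = a²λ1 + b²λ2`. -/
theorem stmt_7
    {V : Type*} [NormedAddCommGroup V] [InnerProductSpace ℝ V] [FiniteDimensional ℝ V]
    (R : V →ₗ[ℝ] V →ₗ[ℝ] V →ₗ[ℝ] V →ₗ[ℝ] ℝ)
    (hskew : ∀ X Y Z W : V, R X Y Z W = - R Y X Z W)
    (hpair : ∀ X Y Z W : V, R X Y Z W = R Z W X Y)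
    (σ1 σ2 : Submodule ℝ V)
    (hσ1 : Module.finrank ℝ σ1 = 2) (hσ2 : Module.finrank ℝ σ2 = 2)
    (horth : ∀ x ∈ σ1, ∀ y ∈ σ2, ⟪x, y⟫ = 0)
    (A : V →ₗ[ℝ] V)
    (hAskew : ∀ x y : V, ⟪A x, y⟫ = -⟪x, A y⟫)
    (hA1 : Submodule.map A σ1 = σ1) (hA2 : Submodule.map A σ2 = σ2)
    (μ1 μ2 : ℝ) (hμ1 : 0 < μ1) (hμ2 : 0 < μ2)
    (hAμ1 : ∀ x ∈ σ1, ‖A x‖ = μ1 * ‖x‖) (hAμ2 : ∀ x ∈ σ2, ‖A x‖ = μ2 * ‖x‖)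
    (lam1 lam2 : ℝ)
    (hlam1 : ∀ x ∈ σ1, ‖x‖ = 1 → R x (A x) (A x) x = lam1 * μ1 ^ 2)
    (hlam2 : ∀ x ∈ σ2, ‖x‖ = 1 → R x (A x) (A x) x = lam2 * μ2 ^ 2)
    (hcvc : ∀ v ∈ σ1 ⊔ σ2, ‖v‖ = 1 → ∀ w ∈ σ1 ⊔ σ2, ⟪w, v⟫ = 0 → ⟪w, A v⟫ = 0 →
      ∀ u ∈ σ1 ⊔ σ2, R w v v u = ⟪w, u⟫)
    (v1 : V) (hv1 : v1 ∈ σ1) (hv1u : ‖v1‖ = 1)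
    (v2 : V) (hv2 : v2 ∈ σ2) (hv2u : ‖v2‖ = 1)
    (a b : ℝ) (hab : a ^ 2 + b ^ 2 = 1) :
    R (a • v1 + b • v2) (A (a • v1 + b • v2)) (A (a • v1 + b • v2)) (a • v1 + b • v2)
        / ‖A (a • v1 + b • v2)‖ ^ 2
      = a ^ 2 * lam1 + b ^ 2 * lam2 :=
  stmt_7_general R hskew hpair σ1 σ2 horth A hAskew hA1 hA2 μ1 μ2 hμ1 hμ2 hAμ1 hAμ2 lam1 lam2 hlam1
    hlam2 hcvc v1 hv1 hv1u v2 hv2 hv2u a b hab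
end

section
/- Under the setup, curvature-one condition, and eigenvalue condition described in the context: if μ1 < μ2, then λ1 < λ2. -/
/-!
Fix unit vectors `e₁ ∈ σ₁`, `e₂ ∈ σ₂` and put `v± = (e₁ ± e₂)/√2`. For a unit `v ∈ W` and `x ∈ W`
orthogonal to `v`, split `x` into its component along `Av`, governed by the eigenvalue condition,
and the rest, governed by the curvature-one condition:
`‖Av‖² R(x,v,v,x) = ‖Av‖² ‖x‖² + (λ(v) - 1) ⟪x, Av⟫²`.
Taking `x = A eᵢ` and adding the identities for `v₊` and `v₋`, in which the cross terms cancel,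
gives `(μ₁² + μ₂²)(λᵢ + 1) = (λ(v₊) + λ(v₋)) μᵢ² + 2 μⱼ²`. Hence
`(μ₁² + μ₂²)(λ₂ - λ₁) = (λ(v₊) + λ(v₋) - 2)(μ₂² - μ₁²)`, which is positive because `λ > 1`.
-/

open scoped RealInnerProductSpace

section

variable {V : Type*} [NormedAddCommGroup V] [InnerProductSpace ℝ V]

theorem Submodule.exists_mem_norm_eq_one_of_finrank_pos {σ : Submodule ℝ V}
    (hσ : 0 < Module.finrank ℝ σ) : ∃ e ∈ σ, ‖e‖ = 1 := by
  have : Nontrivial σ := Module.nontrivial_of_finrank_pos hσ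
  obtain ⟨⟨e, he⟩, hne⟩ := exists_norm_eq σ zero_le_one
  exact ⟨e, he, hne⟩

theorem inner_map_self_eq_zero_of_skew {A : V →ₗ[ℝ] V}
    (hA : ∀ x y : V, ⟪A x, y⟫ = -⟪x, A y⟫) (x : V) : ⟪A x, x⟫ = 0 := by
  have := hA x x
  rw [real_inner_comm (A x) x] at this
  linarith

theorem norm_smul_add_smul_eq_one {e e' : V} (he : ‖e‖ = 1) (he' : ‖e'‖ = 1) (h : ⟪e, e'⟫ = 0)
    {c d : ℝ} (hcd : c ^ 2 + d ^ 2 = 1) : ‖c • e + d • e'‖ = 1 := by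
  have : ‖c • e + d • e'‖ ^ 2 = 1 := by
    rw [norm_add_sq_real, real_inner_smul_left, real_inner_smul_right, h, norm_smul, norm_smul,
      he, he', Real.norm_eq_abs, Real.norm_eq_abs]
    nlinarith [sq_abs c, sq_abs d]
  rwa [pow_eq_one_iff_of_nonneg (norm_nonneg _) two_ne_zero] at this

variable (R : V →ₗ[ℝ] V →ₗ[ℝ] V →ₗ[ℝ] V →ₗ[ℝ] ℝ)

-- `map_sub` and `map_neg` do not fire on a four-fold linear map here, so differences are
-- written as sums with negated scalars.
theorem jacobi_smul_add_smul_add_jacobi_smul_add_neg_smul (x a b : V) (c d : ℝ) :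
    R x (c • a + d • b) (c • a + d • b) x + R x (c • a + (-d) • b) (c • a + (-d) • b) x =
      2 * (c ^ 2 * R x a a x + d ^ 2 * R x b b x) := by
  simp only [map_add, map_smul, LinearMap.add_apply, LinearMap.smul_apply, smul_eq_mul]
  ring

theorem norm_sq_mul_jacobi_eq {W : Submodule ℝ V} {v a x : V} {L : ℝ} (ha : a ∈ W)
    (hav : ⟪a, v⟫ = 0)
    (hcvc : ∀ w ∈ W, ⟪w, v⟫ = 0 → ⟪w, a⟫ = 0 → ∀ u ∈ W, R w v v u = ⟪w, u⟫)
    (heig : ∀ u ∈ W, R a v v u = L * ⟪a, u⟫) (hx : x ∈ W) (hxv : ⟪x, v⟫ = 0) :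
    ‖a‖ ^ 2 * R x v v x = ‖a‖ ^ 2 * ‖x‖ ^ 2 + (L - 1) * ⟪x, a⟫ ^ 2 := by
  let y := ‖a‖ ^ 2 • x + (-⟪x, a⟫) • a
  have hyW : y ∈ W := add_mem (W.smul_mem _ hx) (W.smul_mem _ ha)
  have hyv : ⟪y, v⟫ = 0 := by
    simp only [y, inner_add_left, real_inner_smul_left, hxv, hav]; ring
  have hya : ⟪y, a⟫ = 0 := by
    simp only [y, inner_add_left, real_inner_smul_left, real_inner_self_eq_norm_sq]; ring
  have h := hcvc y hyW hyv hya x hx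
  simp only [y, map_add, map_smul, LinearMap.add_apply, LinearMap.smul_apply, smul_eq_mul,
    heig x hx, inner_add_left, real_inner_smul_left, real_inner_self_eq_norm_sq,
    real_inner_comm x a] at h
  linear_combination h

variable (A : V →ₗ[ℝ] V)

noncomputable def jacobiEigenvalue (v : V) : ℝ := R v (A v) (A v) v / ‖A v‖ ^ 2

theorem jacobiEigenvalue_neg (v : V) : jacobiEigenvalue R A (-v) = jacobiEigenvalue R A v := by
  rw [jacobiEigenvalue, jacobiEigenvalue, ← neg_one_smul ℝ v]
  simp only [map_smul, LinearMap.smul_apply, smul_eq_mul, norm_smul, norm_neg, norm_one]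
  ring

variable {R A}

theorem mul_jacobi_smul_add_smul_eq {σ σ' W : Submodule ℝ V} (hσ : σ ≤ W) (hσ' : σ' ≤ W)
    (horth : ∀ x ∈ σ, ∀ y ∈ σ', ⟪x, y⟫ = 0) (hAskew : ∀ x y : V, ⟪A x, y⟫ = -⟪x, A y⟫)
    (hAσ : σ.map A ≤ σ) (hAσ' : σ'.map A ≤ σ')
    (hcvc : ∀ v ∈ W, ‖v‖ = 1 → ∀ w ∈ W, ⟪w, v⟫ = 0 → ⟪w, A v⟫ = 0 →
      ∀ u ∈ W, R w v v u = ⟪w, u⟫)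
    (heigen : ∀ v ∈ W, ‖v‖ = 1 → ∀ u ∈ W, R (A v) v v u = jacobiEigenvalue R A v * ⟪A v, u⟫)
    {e e' : V} (he : e ∈ σ) (he' : e' ∈ σ') (hne : ‖e‖ = 1) (hne' : ‖e'‖ = 1)
    {μ μ' : ℝ} (hμ : ‖A e‖ = μ) (hμ' : ‖A e'‖ = μ') {c d : ℝ} (hcd : c ^ 2 + d ^ 2 = 1) :
    (c ^ 2 * μ ^ 2 + d ^ 2 * μ' ^ 2) * R (A e) (c • e + d • e') (c • e + d • e') (A e) =
      (c ^ 2 * μ ^ 2 + d ^ 2 * μ' ^ 2) * μ ^ 2 +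
        (jacobiEigenvalue R A (c • e + d • e') - 1) * c ^ 2 * μ ^ 4 := by
  set v := c • e + d • e'
  have hAe : A e ∈ σ := hAσ (Submodule.mem_map_of_mem he)
  have hAe' : A e' ∈ σ' := hAσ' (Submodule.mem_map_of_mem he')
  have hv : v ∈ W := add_mem (W.smul_mem c (hσ he)) (W.smul_mem d (hσ' he'))
  have hnv : ‖v‖ = 1 := norm_smul_add_smul_eq_one hne hne' (horth e he e' he') hcd
  have hAv : A v = c • A e + d • A e' := by simp only [v, map_add, map_smul]
  have hAvW : A v ∈ W := hAv ▸ add_mem (W.smul_mem c (hσ hAe)) (W.smul_mem d (hσ' hAe'))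
  have hAe_v : ⟪A e, v⟫ = 0 := by
    simp only [v, inner_add_right, real_inner_smul_right, inner_map_self_eq_zero_of_skew hAskew,
      horth _ hAe _ he']
    ring
  have hnAv : ‖A v‖ ^ 2 = c ^ 2 * μ ^ 2 + d ^ 2 * μ' ^ 2 := by
    rw [hAv, norm_add_sq_real, real_inner_smul_left, real_inner_smul_right, horth _ hAe _ hAe',
      norm_smul, norm_smul, hμ, hμ', Real.norm_eq_abs, Real.norm_eq_abs]
    nlinarith [sq_abs c, sq_abs d]
  have hAe_Av : ⟪A e, A v⟫ = c * μ ^ 2 := by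
    rw [hAv, inner_add_right, real_inner_smul_right, real_inner_smul_right,
      real_inner_self_eq_norm_sq, horth _ hAe _ hAe', hμ]
    ring
  have h := norm_sq_mul_jacobi_eq R hAvW (inner_map_self_eq_zero_of_skew hAskew v)
    (hcvc v hv hnv) (heigen v hv hnv) (hσ hAe) hAe_v
  rw [hnAv, hAe_Av, hμ] at h
  linear_combination h

theorem sq_add_sq_mul_sectional_add_one_eq {σ σ' W : Submodule ℝ V} (hσ : σ ≤ W) (hσ' : σ' ≤ W)
    (hpair : ∀ X Y Z T : V, R X Y Z T = R Z T X Y)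
    (horth : ∀ x ∈ σ, ∀ y ∈ σ', ⟪x, y⟫ = 0) (hAskew : ∀ x y : V, ⟪A x, y⟫ = -⟪x, A y⟫)
    (hAσ : σ.map A ≤ σ) (hAσ' : σ'.map A ≤ σ')
    (hcvc : ∀ v ∈ W, ‖v‖ = 1 → ∀ w ∈ W, ⟪w, v⟫ = 0 → ⟪w, A v⟫ = 0 →
      ∀ u ∈ W, R w v v u = ⟪w, u⟫)
    (heigen : ∀ v ∈ W, ‖v‖ = 1 → ∀ u ∈ W, R (A v) v v u = jacobiEigenvalue R A v * ⟪A v, u⟫)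
    {e e' : V} (he : e ∈ σ) (he' : e' ∈ σ') (hne : ‖e‖ = 1) (hne' : ‖e'‖ = 1)
    {μ μ' : ℝ} (hμ : ‖A e‖ = μ) (hμ' : ‖A e'‖ = μ') (hμ0 : μ ≠ 0)
    {lam : ℝ} (hlam : R e (A e) (A e) e = lam * μ ^ 2) {r : ℝ} (hr : 2 * r ^ 2 = 1) :
    (μ ^ 2 + μ' ^ 2) * (lam + 1) =
      (jacobiEigenvalue R A (r • e + r • e') + jacobiEigenvalue R A (r • e + (-r) • e')) * μ ^ 2 +
        2 * μ' ^ 2 := by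
  have hAe : A e ∈ σ := hAσ (Submodule.mem_map_of_mem he)
  have hsum := mul_jacobi_smul_add_smul_eq hσ hσ' horth hAskew hAσ hAσ' hcvc heigen he he'
    hne hne' hμ hμ' (c := r) (d := r) (by linarith)
  have hdiff := mul_jacobi_smul_add_smul_eq hσ hσ' horth hAskew hAσ hAσ' hcvc heigen he he'
    hne hne' hμ hμ' (c := r) (d := -r) (by linarith)
  have hpar := jacobi_smul_add_smul_add_jacobi_smul_add_neg_smul R (A e) e e' r r
  have hee : R (A e) e e (A e) = lam * μ ^ 2 := (hpair _ _ _ _).trans hlam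
  have he'e' : R (A e) e' e' (A e) = μ ^ 2 := by
    rw [hcvc e' (hσ' he') hne' (A e) (hσ hAe) (horth _ hAe _ he') (horth _ hAe _ (hAσ'
      (Submodule.mem_map_of_mem he'))) (A e) (hσ hAe), real_inner_self_eq_norm_sq, hμ]
  have hr2 : r ^ 2 = 1 / 2 := by linarith
  rw [neg_sq, hr2] at hdiff
  rw [hr2] at hsum hpar
  apply mul_left_cancel₀ (pow_ne_zero 2 hμ0)
  linear_combination 2 * (hsum + hdiff) - (μ ^ 2 + μ' ^ 2) * (hpar + hee + he'e')

end

theorem stmt_8_general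
    {V : Type*} [NormedAddCommGroup V] [InnerProductSpace ℝ V]
    (R : V →ₗ[ℝ] V →ₗ[ℝ] V →ₗ[ℝ] V →ₗ[ℝ] ℝ)
    (hpair : ∀ X Y Z W : V, R X Y Z W = R Z W X Y)
    (σ1 σ2 : Submodule ℝ V)
    (hσ1 : Module.finrank ℝ σ1 = 2) (hσ2 : Module.finrank ℝ σ2 = 2)
    (horth : ∀ x ∈ σ1, ∀ y ∈ σ2, ⟪x, y⟫ = 0)
    (A : V →ₗ[ℝ] V)
    (hAskew : ∀ x y : V, ⟪A x, y⟫ = -⟪x, A y⟫)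
    (hA1 : Submodule.map A σ1 = σ1) (hA2 : Submodule.map A σ2 = σ2)
    (μ1 μ2 : ℝ) (hμ1 : 0 < μ1) (hμ2 : 0 < μ2)
    (hAμ1 : ∀ x ∈ σ1, ‖A x‖ = μ1 * ‖x‖) (hAμ2 : ∀ x ∈ σ2, ‖A x‖ = μ2 * ‖x‖)
    (lam1 lam2 : ℝ)
    (hlam1 : ∀ x ∈ σ1, ‖x‖ = 1 → R x (A x) (A x) x = lam1 * μ1 ^ 2)
    (hlam2 : ∀ x ∈ σ2, ‖x‖ = 1 → R x (A x) (A x) x = lam2 * μ2 ^ 2)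
    (hcvc : ∀ v ∈ σ1 ⊔ σ2, ‖v‖ = 1 → ∀ w ∈ σ1 ⊔ σ2, ⟪w, v⟫ = 0 → ⟪w, A v⟫ = 0 →
      ∀ u ∈ σ1 ⊔ σ2, R w v v u = ⟪w, u⟫)
    (heigen : ∀ v ∈ σ1 ⊔ σ2, ‖v‖ = 1 →
      1 < R v (A v) (A v) v / ‖A v‖ ^ 2 ∧
      ∀ u ∈ σ1 ⊔ σ2, R (A v) v v u = (R v (A v) (A v) v / ‖A v‖ ^ 2) * ⟪A v, u⟫)
    (hμ : μ1 < μ2) :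
    lam1 < lam2 := by
  obtain ⟨e1, he1, hne1⟩ := Submodule.exists_mem_norm_eq_one_of_finrank_pos (hσ1 ▸ two_pos)
  obtain ⟨e2, he2, hne2⟩ := Submodule.exists_mem_norm_eq_one_of_finrank_pos (hσ2 ▸ two_pos)
  have hAe1 : ‖A e1‖ = μ1 := by rw [hAμ1 e1 he1, hne1, mul_one]
  have hAe2 : ‖A e2‖ = μ2 := by rw [hAμ2 e2 he2, hne2, mul_one]
  have horth' : ∀ x ∈ σ2, ∀ y ∈ σ1, ⟪x, y⟫ = 0 := fun x hx y hy ↦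
    real_inner_comm x y ▸ horth y hy x hx
  have heigen' := fun v hv hnv ↦ (heigen v hv hnv).2
  set r := (√2)⁻¹
  have hr : 2 * r ^ 2 = 1 := by rw [inv_pow, Real.sq_sqrt zero_le_two]; norm_num
  have h1 := sq_add_sq_mul_sectional_add_one_eq le_sup_left le_sup_right hpair horth hAskew
    hA1.le hA2.le hcvc heigen' he1 he2 hne1 hne2 hAe1 hAe2 hμ1.ne' (hlam1 e1 he1 hne1) hr
  have h2 := sq_add_sq_mul_sectional_add_one_eq le_sup_right le_sup_left hpair horth' hAskew
    hA2.le hA1.le hcvc heigen' he2 he1 hne2 hne1 hAe2 hAe1 hμ2.ne' (hlam2 e2 he2 hne2) hr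
  have hswap : r • e2 + (-r) • e1 = -(r • e1 + (-r) • e2) := by module
  rw [add_comm (r • e2), hswap, jacobiEigenvalue_neg] at h2
  have hL (d : ℝ) (hd : r ^ 2 + d ^ 2 = 1) : 1 < jacobiEigenvalue R A (r • e1 + d • e2) :=
    (heigen _ (add_mem (Submodule.smul_mem _ r (Submodule.mem_sup_left he1))
      (Submodule.smul_mem _ d (Submodule.mem_sup_right he2)))
      (norm_smul_add_smul_eq_one hne1 hne2 (horth e1 he1 e2 he2) hd)).1
  have hLsum := add_lt_add (hL r (by linarith)) (hL (-r) (by rw [neg_sq]; linarith))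
  have key : (μ1 ^ 2 + μ2 ^ 2) * (lam2 - lam1) = (jacobiEigenvalue R A (r • e1 + r • e2) +
      jacobiEigenvalue R A (r • e1 + (-r) • e2) - 2) * (μ2 ^ 2 - μ1 ^ 2) := by
    linear_combination h2 - h1
  have hpos : 0 < (μ1 ^ 2 + μ2 ^ 2) * (lam2 - lam1) :=
    key ▸ mul_pos (by linarith) (by nlinarith)
  exact sub_pos.1 (pos_of_mul_pos_right hpos (by positivity))

/-- In the two-invariant-planes setup with the curvature-one condition and
the eigenvalue condition on `W = σ1 ⊕ σ2`: if `μ1 < μ2` then `λ1 < λ2`. -/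
theorem stmt_8
    {V : Type*} [NormedAddCommGroup V] [InnerProductSpace ℝ V] [FiniteDimensional ℝ V]
    (R : V →ₗ[ℝ] V →ₗ[ℝ] V →ₗ[ℝ] V →ₗ[ℝ] ℝ)
    (hskew : ∀ X Y Z W : V, R X Y Z W = - R Y X Z W)
    (hpair : ∀ X Y Z W : V, R X Y Z W = R Z W X Y)
    (σ1 σ2 : Submodule ℝ V)
    (hσ1 : Module.finrank ℝ σ1 = 2) (hσ2 : Module.finrank ℝ σ2 = 2)
    (horth : ∀ x ∈ σ1, ∀ y ∈ σ2, ⟪x, y⟫ = 0)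
    (A : V →ₗ[ℝ] V)
    (hAskew : ∀ x y : V, ⟪A x, y⟫ = -⟪x, A y⟫)
    (hA1 : Submodule.map A σ1 = σ1) (hA2 : Submodule.map A σ2 = σ2)
    (μ1 μ2 : ℝ) (hμ1 : 0 < μ1) (hμ2 : 0 < μ2)
    (hAμ1 : ∀ x ∈ σ1, ‖A x‖ = μ1 * ‖x‖) (hAμ2 : ∀ x ∈ σ2, ‖A x‖ = μ2 * ‖x‖)
    (lam1 lam2 : ℝ)
    (hlam1 : ∀ x ∈ σ1, ‖x‖ = 1 → R x (A x) (A x) x = lam1 * μ1 ^ 2)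
    (hlam2 : ∀ x ∈ σ2, ‖x‖ = 1 → R x (A x) (A x) x = lam2 * μ2 ^ 2)
    (hcvc : ∀ v ∈ σ1 ⊔ σ2, ‖v‖ = 1 → ∀ w ∈ σ1 ⊔ σ2, ⟪w, v⟫ = 0 → ⟪w, A v⟫ = 0 →
      ∀ u ∈ σ1 ⊔ σ2, R w v v u = ⟪w, u⟫)
    (heigen : ∀ v ∈ σ1 ⊔ σ2, ‖v‖ = 1 →
      1 < R v (A v) (A v) v / ‖A v‖ ^ 2 ∧
      ∀ u ∈ σ1 ⊔ σ2, R (A v) v v u = (R v (A v) (A v) v / ‖A v‖ ^ 2) * ⟪A v, u⟫)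
    (hμ : μ1 < μ2) :
    lam1 < lam2 :=
  stmt_8_general R hpair σ1 σ2 hσ1 hσ2 horth A hAskew hA1 hA2 μ1 μ2 hμ1 hμ2 hAμ1 hAμ2 lam1 lam2
    hlam1 hlam2 hcvc heigen hμ
end

section
/- Under the setup and curvature-one condition described in the context, assume in addition that R satisfies the first Bianchi identity and that λ1 > 1 and λ2 > 1. Fix unit vectors e1 ∈ σ1 and e2 ∈ σ2, set ē_i = Ae_i/μ_i, and define α = R(e1, ē1, e2, ē2), β = R(ē1, e2, e1, ē2), γ = R(e2, e1, ē1, ē2). Then β = γ > 0, α = -2γ, μ1²(λ2 - 1) + μ2²(λ1 - 1) = 6·μ1·μ2·γ, and (λ1 - 1)(λ2 - 1) ≤ 9γ². -/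
open scoped RealInnerProductSpace

set_option maxHeartbeats 1000000 in
/-- In the two-invariant-planes setup with the curvature-one condition,
the first Bianchi identity, and `λ1, λ2 > 1`: with `α = R(e1,ē1,e2,ē2)`,
`β = R(ē1,e2,e1,ē2)`, `γ = R(e2,e1,ē1,ē2)` one has `β = γ > 0`, `α = -2γ`,
`μ1²(λ2-1) + μ2²(λ1-1) = 6μ1μ2γ`, and `(λ1-1)(λ2-1) ≤ 9γ²`. -/
theorem stmt_9
    {V : Type*} [NormedAddCommGroup V] [InnerProductSpace ℝ V] [FiniteDimensional ℝ V]
    (R : V →ₗ[ℝ] V →ₗ[ℝ] V →ₗ[ℝ] V →ₗ[ℝ] ℝ)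
    (hskew : ∀ X Y Z W : V, R X Y Z W = - R Y X Z W)
    (hpair : ∀ X Y Z W : V, R X Y Z W = R Z W X Y)
    (hbianchi : ∀ X Y Z W : V, R X Y Z W + R Y Z X W + R Z X Y W = 0)
    (σ1 σ2 : Submodule ℝ V)
    (hσ1 : Module.finrank ℝ σ1 = 2) (hσ2 : Module.finrank ℝ σ2 = 2)
    (horth : ∀ x ∈ σ1, ∀ y ∈ σ2, ⟪x, y⟫ = 0)
    (A : V →ₗ[ℝ] V)
    (hAskew : ∀ x y : V, ⟪A x, y⟫ = -⟪x, A y⟫)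
    (hA1 : Submodule.map A σ1 = σ1) (hA2 : Submodule.map A σ2 = σ2)
    (μ1 μ2 : ℝ) (hμ1 : 0 < μ1) (hμ2 : 0 < μ2)
    (hAμ1 : ∀ x ∈ σ1, ‖A x‖ = μ1 * ‖x‖) (hAμ2 : ∀ x ∈ σ2, ‖A x‖ = μ2 * ‖x‖)
    (lam1 lam2 : ℝ) (hlam1' : 1 < lam1) (hlam2' : 1 < lam2)
    (hlam1 : ∀ x ∈ σ1, ‖x‖ = 1 → R x (A x) (A x) x = lam1 * μ1 ^ 2)
    (hlam2 : ∀ x ∈ σ2, ‖x‖ = 1 → R x (A x) (A x) x = lam2 * μ2 ^ 2)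
    (hcvc : ∀ v ∈ σ1 ⊔ σ2, ‖v‖ = 1 → ∀ w ∈ σ1 ⊔ σ2, ⟪w, v⟫ = 0 → ⟪w, A v⟫ = 0 →
      ∀ u ∈ σ1 ⊔ σ2, R w v v u = ⟪w, u⟫)
    (e1 : V) (he1 : e1 ∈ σ1) (he1u : ‖e1‖ = 1)
    (e2 : V) (he2 : e2 ∈ σ2) (he2u : ‖e2‖ = 1)
    (ebar1 ebar2 : V) (hebar1 : ebar1 = μ1⁻¹ • A e1) (hebar2 : ebar2 = μ2⁻¹ • A e2)
    (α β γ : ℝ)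
    (hα : α = R e1 ebar1 e2 ebar2) (hβ : β = R ebar1 e2 e1 ebar2)
    (hγ : γ = R e2 e1 ebar1 ebar2) :
    β = γ ∧ 0 < γ ∧ α = -2 * γ ∧
      μ1 ^ 2 * (lam2 - 1) + μ2 ^ 2 * (lam1 - 1) = 6 * μ1 * μ2 * γ ∧
      (lam1 - 1) * (lam2 - 1) ≤ 9 * γ ^ 2 := by
  -- abbreviation for √2⁻¹
  set s : ℝ := (Real.sqrt 2)⁻¹ with hs
  have hs2 : s ^ 2 = 1 / 2 := by
    rw [hs, inv_pow, Real.sq_sqrt (by norm_num : (0:ℝ) ≤ 2)]; norm_num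
  -- basic A facts
  have hAe1 : A e1 = μ1 • ebar1 := by
    rw [hebar1, smul_smul, mul_inv_cancel₀ hμ1.ne', one_smul]
  have hAe2 : A e2 = μ2 • ebar2 := by
    rw [hebar2, smul_smul, mul_inv_cancel₀ hμ2.ne', one_smul]
  have hb1σ : ebar1 ∈ σ1 := by
    rw [hebar1]
    exact Submodule.smul_mem _ _ (hA1 ▸ Submodule.mem_map_of_mem he1)
  have hb2σ : ebar2 ∈ σ2 := by
    rw [hebar2]
    exact Submodule.smul_mem _ _ (hA2 ▸ Submodule.mem_map_of_mem he2)
  have hb1n : ‖ebar1‖ = 1 := by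
    rw [hebar1, norm_smul, hAμ1 e1 he1, he1u, mul_one, Real.norm_eq_abs,
      abs_of_pos (inv_pos.mpr hμ1), inv_mul_cancel₀ hμ1.ne']
  have hb2n : ‖ebar2‖ = 1 := by
    rw [hebar2, norm_smul, hAμ2 e2 he2, he2u, mul_one, Real.norm_eq_abs,
      abs_of_pos (inv_pos.mpr hμ2), inv_mul_cancel₀ hμ2.ne']
  have skew_self : ∀ x : V, ⟪x, A x⟫ = 0 := by
    intro x
    have h1 := hAskew x x
    have h2 := real_inner_comm (A x) x
    linarith
  -- inner product table: a=e1, b=ebar1, c=e2, d=ebar2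
  have iaa : ⟪e1, e1⟫ = 1 := by
    rw [real_inner_self_eq_norm_mul_norm, he1u]; norm_num
  have icc : ⟪e2, e2⟫ = 1 := by
    rw [real_inner_self_eq_norm_mul_norm, he2u]; norm_num
  have ibb : ⟪ebar1, ebar1⟫ = 1 := by
    rw [real_inner_self_eq_norm_mul_norm, hb1n]; norm_num
  have idd : ⟪ebar2, ebar2⟫ = 1 := by
    rw [real_inner_self_eq_norm_mul_norm, hb2n]; norm_num
  have iab : ⟪e1, ebar1⟫ = 0 := by
    rw [hebar1, real_inner_smul_right, skew_self e1, mul_zero]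
  have iba : ⟪ebar1, e1⟫ = 0 := by rw [real_inner_comm]; exact iab
  have icd : ⟪e2, ebar2⟫ = 0 := by
    rw [hebar2, real_inner_smul_right, skew_self e2, mul_zero]
  have idc : ⟪ebar2, e2⟫ = 0 := by rw [real_inner_comm]; exact icd
  have iac : ⟪e1, e2⟫ = 0 := horth e1 he1 e2 he2
  have ica : ⟪e2, e1⟫ = 0 := by rw [real_inner_comm]; exact iac
  have iad : ⟪e1, ebar2⟫ = 0 := horth e1 he1 ebar2 hb2σ
  have ida : ⟪ebar2, e1⟫ = 0 := by rw [real_inner_comm]; exact iad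
  have ibc : ⟪ebar1, e2⟫ = 0 := horth ebar1 hb1σ e2 he2
  have icb : ⟪e2, ebar1⟫ = 0 := by rw [real_inner_comm]; exact ibc
  have ibd : ⟪ebar1, ebar2⟫ = 0 := horth ebar1 hb1σ ebar2 hb2σ
  have idb : ⟪ebar2, ebar1⟫ = 0 := by rw [real_inner_comm]; exact ibd
  -- A ebar1 = -(μ1 • e1), A ebar2 = -(μ2 • e2)
  have hAb1 : A ebar1 = -(μ1 • e1) := by
    have hn : ⟪A ebar1, A ebar1⟫ = μ1 * μ1 := by
      rw [real_inner_self_eq_norm_mul_norm, hAμ1 ebar1 hb1σ, hb1n, mul_one]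
    have hi : ⟪A ebar1, e1⟫ = -μ1 := by
      rw [hAskew ebar1 e1, hAe1, real_inner_smul_right, ibb, mul_one]
    have hi' : ⟪e1, A ebar1⟫ = -μ1 := by rw [real_inner_comm]; exact hi
    have hz : ⟪A ebar1 + μ1 • e1, A ebar1 + μ1 • e1⟫ = 0 := by
      simp only [inner_add_left, inner_add_right, real_inner_smul_left,
        real_inner_smul_right, hn, hi, hi', iaa]
      ring
    have h0 := inner_self_eq_zero.mp hz
    exact eq_neg_of_add_eq_zero_left h0
  have hAb2 : A ebar2 = -(μ2 • e2) := by
    have hn : ⟪A ebar2, A ebar2⟫ = μ2 * μ2 := by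
      rw [real_inner_self_eq_norm_mul_norm, hAμ2 ebar2 hb2σ, hb2n, mul_one]
    have hi : ⟪A ebar2, e2⟫ = -μ2 := by
      rw [hAskew ebar2 e2, hAe2, real_inner_smul_right, idd, mul_one]
    have hi' : ⟪e2, A ebar2⟫ = -μ2 := by rw [real_inner_comm]; exact hi
    have hz : ⟪A ebar2 + μ2 • e2, A ebar2 + μ2 • e2⟫ = 0 := by
      simp only [inner_add_left, inner_add_right, real_inner_smul_left,
        real_inner_smul_right, hn, hi, hi', icc]
      ring
    have h0 := inner_self_eq_zero.mp hz
    exact eq_neg_of_add_eq_zero_left h0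
  -- derived tensor symmetries
  have hswap : ∀ X Y Z W : V, R X Y Z W = -R X Y W Z := by
    intro X Y Z W
    rw [hpair X Y Z W, hskew Z W X Y, hpair W Z X Y]
  have hzz : ∀ X Y Z : V, R X Y Z Z = 0 := by
    intro X Y Z
    have := hswap X Y Z Z
    linarith
  -- sectional values
  have L1 : R e1 ebar1 ebar1 e1 = lam1 := by
    have h := hlam1 e1 he1 he1u
    rw [hAe1] at h
    simp only [map_smul, LinearMap.smul_apply, smul_eq_mul] at h
    have h2 : μ1 ^ 2 * R e1 ebar1 ebar1 e1 = μ1 ^ 2 * lam1 := by linear_combination h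
    exact mul_left_cancel₀ (pow_ne_zero 2 hμ1.ne') h2
  have L1' : R ebar1 e1 e1 ebar1 = lam1 := by
    rw [hskew ebar1 e1 e1 ebar1, hswap e1 ebar1 e1 ebar1, neg_neg, L1]
  have L2 : R ebar2 e2 e2 ebar2 = lam2 := by
    have h := hlam2 ebar2 hb2σ hb2n
    rw [hAb2] at h
    simp only [map_neg, map_smul, LinearMap.neg_apply, LinearMap.smul_apply,
      smul_eq_mul] at h
    have h2 : μ2 ^ 2 * R ebar2 e2 e2 ebar2 = μ2 ^ 2 * lam2 := by linear_combination h
    exact mul_left_cancel₀ (pow_ne_zero 2 hμ2.ne') h2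
  -- direct curvature-one applications
  have dcvc1 : ∀ v ∈ σ1, ‖v‖ = 1 → ∀ w ∈ σ2, ∀ u ∈ σ1 ⊔ σ2, R w v v u = ⟪w, u⟫ := by
    intro v hv hvn w hw u hu
    have hAv : A v ∈ σ1 := hA1 ▸ Submodule.mem_map_of_mem hv
    exact hcvc v (Submodule.mem_sup_left hv) hvn w (Submodule.mem_sup_right hw)
      (by rw [real_inner_comm]; exact horth v hv w hw)
      (by rw [real_inner_comm]; exact horth (A v) hAv w hw) u hu
  have dcvc2 : ∀ v ∈ σ2, ‖v‖ = 1 → ∀ w ∈ σ1, ∀ u ∈ σ1 ⊔ σ2, R w v v u = ⟪w, u⟫ := by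
    intro v hv hvn w hw u hu
    have hAv : A v ∈ σ2 := hA2 ▸ Submodule.mem_map_of_mem hv
    exact hcvc v (Submodule.mem_sup_right hv) hvn w (Submodule.mem_sup_left hw)
      (horth w hw v hv) (horth w hw (A v) hAv) u hu
  have muaW : e1 ∈ σ1 ⊔ σ2 := Submodule.mem_sup_left he1
  have mubW : ebar1 ∈ σ1 ⊔ σ2 := Submodule.mem_sup_left hb1σ
  have mucW : e2 ∈ σ1 ⊔ σ2 := Submodule.mem_sup_right he2
  have mudW : ebar2 ∈ σ1 ⊔ σ2 := Submodule.mem_sup_right hb2σ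
  have d1 : R ebar2 e1 e1 ebar2 = 1 := by
    rw [dcvc1 e1 he1 he1u ebar2 hb2σ ebar2 mudW]; exact idd
  have d2 : R ebar2 e1 e1 ebar1 = 0 := by
    rw [dcvc1 e1 he1 he1u ebar2 hb2σ ebar1 mubW]; exact idb
  have d3 : R e2 e1 e1 ebar1 = 0 := by
    rw [dcvc1 e1 he1 he1u e2 he2 ebar1 mubW]; exact icb
  have d4 : R e2 ebar1 ebar1 ebar1 = 0 := by
    rw [dcvc1 ebar1 hb1σ hb1n e2 he2 ebar1 mubW]; exact icb
  have d5 : R ebar1 e2 e2 ebar1 = 1 := by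
    rw [dcvc2 e2 he2 he2u ebar1 hb1σ ebar1 mubW]; exact ibb
  have d6 : R e1 e2 e2 e1 = 1 := by
    rw [dcvc2 e2 he2 he2u e1 he1 e1 muaW]; exact iaa
  have d7 : R e1 e2 e2 ebar2 = 0 := by
    rw [dcvc2 e2 he2 he2u e1 he1 ebar2 mudW]; exact iad
  have d8 : R ebar1 e2 e2 ebar2 = 0 := by
    rw [dcvc2 e2 he2 he2u ebar1 hb1σ ebar2 mudW]; exact ibd
  have d9 : R e1 ebar2 ebar2 ebar2 = 0 := by
    rw [dcvc2 ebar2 hb2σ hb2n e1 he1 ebar2 mudW]; exact iad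
  have d10 : R ebar2 ebar1 ebar1 e1 = 0 := by
    rw [dcvc1 ebar1 hb1σ hb1n ebar2 hb2σ e1 muaW]; exact ida
  have d11 : R e2 ebar1 ebar1 e1 = 0 := by
    rw [dcvc1 ebar1 hb1σ hb1n e2 he2 e1 muaW]; exact ica
  have d12 : R ebar2 e1 e1 e1 = 0 := by
    rw [dcvc1 e1 he1 he1u ebar2 hb2σ e1 muaW]; exact ida
  -- unit norm of combinations
  have norm_one_of_inner : ∀ z : V, ⟪z, z⟫ = 1 → ‖z‖ = 1 := by
    intro z hz
    have h : ‖z‖ * ‖z‖ = 1 := by rw [← real_inner_self_eq_norm_mul_norm]; exact hz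
    rcases mul_self_eq_one_iff.mp h with h1 | h1
    · exact h1
    · linarith [norm_nonneg z]
  have unit2 : ∀ x y : V, ⟪x, x⟫ = 1 → ⟪y, y⟫ = 1 → ⟪x, y⟫ = 0 → ‖s • (x + y)‖ = 1 := by
    intro x y hx hy hxy
    have hyx : ⟪y, x⟫ = 0 := by rw [real_inner_comm]; exact hxy
    refine norm_one_of_inner _ ?_
    simp only [inner_add_left, inner_add_right, real_inner_smul_left,
      real_inner_smul_right, hx, hy, hxy, hyx]
    linear_combination 2 * hs2
  -- polarization facts (within a single plane)
  have P1 : R e2 ebar1 e1 ebar1 = 0 := by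
    have main := dcvc1 (s • (e1 + ebar1))
      (Submodule.smul_mem _ _ (add_mem he1 hb1σ)) (unit2 e1 ebar1 iaa ibb iab)
      e2 he2 ebar1 mubW
    simp only [map_add, map_smul, LinearMap.add_apply, LinearMap.smul_apply,
      smul_eq_mul, inner_add_right, real_inner_smul_right, d3, d4,
      hzz e2 e1 ebar1, icb] at main
    linear_combination 2 * main - 2 * (R e2 ebar1 e1 ebar1) * hs2
  have P2 : R ebar2 e1 ebar1 e1 = 0 := by
    have main := dcvc1 (s • (e1 + ebar1))
      (Submodule.smul_mem _ _ (add_mem he1 hb1σ)) (unit2 e1 ebar1 iaa ibb iab)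
      ebar2 hb2σ e1 muaW
    simp only [map_add, map_smul, LinearMap.add_apply, LinearMap.smul_apply,
      smul_eq_mul, inner_add_right, real_inner_smul_right, d12, d10,
      hzz ebar2 ebar1 e1, ida] at main
    linear_combination 2 * main - 2 * (R ebar2 e1 ebar1 e1) * hs2
  have P3 : R e1 ebar2 e2 ebar2 = 0 := by
    have main := dcvc2 (s • (e2 + ebar2))
      (Submodule.smul_mem _ _ (add_mem he2 hb2σ)) (unit2 e2 ebar2 icc idd icd)
      e1 he1 ebar2 mudW
    simp only [map_add, map_smul, LinearMap.add_apply, LinearMap.smul_apply,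
      smul_eq_mul, inner_add_right, real_inner_smul_right, d7, d9,
      hzz e1 e2 ebar2, iad] at main
    linear_combination 2 * main - 2 * (R e1 ebar2 e2 ebar2) * hs2
  -- the 24 monomial values
  have m11 : R ebar1 e1 e1 ebar2 = 0 := by
    rw [hpair ebar1 e1 e1 ebar2, hskew e1 ebar2 ebar1 e1, P2, neg_zero]
  have m12 : R ebar1 e1 e2 ebar2 = -α := by
    rw [hskew ebar1 e1 e2 ebar2, ← hα]
  have m13 : R ebar1 e2 e1 ebar2 = β := hβ.symm
  have m16 : R ebar2 e1 e2 ebar2 = 0 := by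
    rw [hskew ebar2 e1 e2 ebar2, P3, neg_zero]
  have m17 : R ebar2 e2 e1 ebar2 = 0 := by
    rw [hpair ebar2 e2 e1 ebar2, hswap e1 ebar2 ebar2 e2, P3, neg_zero]
  have m22 : R ebar1 e1 e2 ebar1 = 0 := by
    rw [hpair ebar1 e1 e2 ebar1, d11]
  have m23 : R ebar1 e2 e1 ebar1 = 0 := by
    rw [hskew ebar1 e2 e1 ebar1, P1, neg_zero]
  have m26 : R ebar2 e1 e2 ebar1 = β := by
    rw [hpair ebar2 e1 e2 ebar1, hskew e2 ebar1 ebar2 e1, hswap ebar1 e2 ebar2 e1,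
      neg_neg, ← hβ]
  have m27 : R ebar2 e2 e1 ebar1 = -α := by
    rw [hskew ebar2 e2 e1 ebar1, hpair e2 ebar2 e1 ebar1, ← hα]
  have m28 : R ebar2 e2 e2 ebar1 = 0 := by
    rw [hpair ebar2 e2 e2 ebar1, hskew e2 ebar1 ebar2 e2, hswap ebar1 e2 ebar2 e2,
      neg_neg, d8]
  have m32 : R e1 ebar1 e2 e1 = 0 := by
    rw [hpair e1 ebar1 e2 e1, d3]
  have m33 : R e1 e2 ebar1 e1 = 0 := by
    rw [hpair e1 e2 ebar1 e1, hskew ebar1 e1 e1 e2, hswap e1 ebar1 e1 e2, neg_neg,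
      m32]
  have m36 : R ebar2 ebar1 e2 e1 = -γ := by
    rw [hpair ebar2 ebar1 e2 e1, hswap e2 e1 ebar2 ebar1, ← hγ]
  have m37 : R ebar2 e2 ebar1 e1 = α := by
    rw [hskew ebar2 e2 ebar1 e1, hswap e2 ebar2 ebar1 e1, neg_neg,
      hpair e2 ebar2 e1 ebar1, ← hα]
  have m38 : R ebar2 e2 e2 e1 = 0 := by
    rw [hpair ebar2 e2 e2 e1, hskew e2 e1 ebar2 e2, hswap e1 e2 ebar2 e2, neg_neg,
      d7]
  -- Bianchi
  have B : α + β + γ = 0 := by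
    have h := hbianchi e1 ebar1 e2 ebar2
    rw [← hα, ← hβ, ← hγ] at h
    exact h
  -- main equation E1 : v = s(e1+e2), w = -μ2 ē1 + μ1 ē2, u = ebar2
  have hvW12 : s • (e1 + e2) ∈ σ1 ⊔ σ2 :=
    Submodule.smul_mem _ _ (add_mem muaW mucW)
  have hvn12 : ‖s • (e1 + e2)‖ = 1 := unit2 e1 e2 iaa icc iac
  have hwW12 : (-μ2) • ebar1 + μ1 • ebar2 ∈ σ1 ⊔ σ2 :=
    add_mem (Submodule.smul_mem _ _ mubW) (Submodule.smul_mem _ _ mudW)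
  have hwv12 : ⟪(-μ2) • ebar1 + μ1 • ebar2, s • (e1 + e2)⟫ = 0 := by
    simp only [inner_add_left, inner_add_right, real_inner_smul_left,
      real_inner_smul_right, iba, ibc, ida, idc]
    ring
  have hAv12 : A (s • (e1 + e2)) = s • (μ1 • ebar1 + μ2 • ebar2) := by
    rw [map_smul, map_add, hAe1, hAe2]
  have hwAv12 : ⟪(-μ2) • ebar1 + μ1 • ebar2, A (s • (e1 + e2))⟫ = 0 := by
    rw [hAv12]
    simp only [inner_add_left, inner_add_right, real_inner_smul_left,
      real_inner_smul_right, ibb, ibd, idb, idd]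
    ring
  have E1 : μ2 * α - μ2 * β + μ1 * lam2 - μ1 = 0 := by
    have main := hcvc _ hvW12 hvn12 _ hwW12 hwv12 hwAv12 ebar2 mudW
    simp only [map_add, map_smul, LinearMap.add_apply, LinearMap.smul_apply,
      smul_eq_mul, inner_add_left, real_inner_smul_left,
      m11, m12, m13, d8, d1, m16, m17, L2, ibd, idd] at main
    linear_combination 2 * main - 2 * (μ1 + μ2 * α - μ2 * β + μ1 * lam2) * hs2
  have E2 : μ1 * β - μ1 * α - μ2 * lam1 + μ2 = 0 := by
    have main := hcvc _ hvW12 hvn12 _ hwW12 hwv12 hwAv12 ebar1 mubW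
    simp only [map_add, map_smul, LinearMap.add_apply, LinearMap.smul_apply,
      smul_eq_mul, inner_add_left, real_inner_smul_left,
      L1', m22, m23, d5, d2, m26, m27, m28, ibb, idb] at main
    linear_combination 2 * main - 2 * (-(μ2 * lam1) + μ1 * β - μ1 * α - μ2) * hs2
  -- main equation E3 : v = s(ebar1+e2), w = μ2 e1 + μ1 ē2, u = e1
  have hvW32 : s • (ebar1 + e2) ∈ σ1 ⊔ σ2 :=
    Submodule.smul_mem _ _ (add_mem mubW mucW)
  have hvn32 : ‖s • (ebar1 + e2)‖ = 1 := unit2 ebar1 e2 ibb icc ibc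
  have hwW32 : μ2 • e1 + μ1 • ebar2 ∈ σ1 ⊔ σ2 :=
    add_mem (Submodule.smul_mem _ _ muaW) (Submodule.smul_mem _ _ mudW)
  have hwv32 : ⟪μ2 • e1 + μ1 • ebar2, s • (ebar1 + e2)⟫ = 0 := by
    simp only [inner_add_left, inner_add_right, real_inner_smul_left,
      real_inner_smul_right, iab, iac, idb, idc]
    ring
  have hAv32 : A (s • (ebar1 + e2)) = s • (-(μ1 • e1) + μ2 • ebar2) := by
    rw [map_smul, map_add, hAb1, hAe2]
  have hwAv32 : ⟪μ2 • e1 + μ1 • ebar2, A (s • (ebar1 + e2))⟫ = 0 := by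
    rw [hAv32]
    simp only [inner_add_left, inner_add_right, inner_neg_left, inner_neg_right,
      real_inner_smul_left, real_inner_smul_right, iaa, iad, ida, idd]
    ring
  have E3 : μ2 * lam1 + μ1 * α - μ1 * γ - μ2 = 0 := by
    have main := hcvc _ hvW32 hvn32 _ hwW32 hwv32 hwAv32 e1 muaW
    simp only [map_add, map_smul, LinearMap.add_apply, LinearMap.smul_apply,
      smul_eq_mul, inner_add_left, real_inner_smul_left,
      L1, m32, m33, d6, d10, m36, m37, m38, iaa, ida] at main
    linear_combination 2 * main - 2 * (μ2 * lam1 - μ1 * γ + μ1 * α + μ2) * hs2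
  -- final algebra
  have g1 : β = γ := by
    have h : μ1 * (β - γ) = 0 := by linarith
    have := (mul_eq_zero.mp h).resolve_left hμ1.ne'
    linarith
  have g3 : α = -2 * γ := by linarith
  have h3 : μ2 * (lam1 - 1) = 3 * μ1 * γ := by linear_combination E3 - μ1 * g3
  have h4 : μ1 * (lam2 - 1) = 3 * μ2 * γ := by linear_combination E1 - μ2 * g3 + μ2 * g1
  have g2 : 0 < γ := by
    have hp : 0 < μ2 * (lam1 - 1) := mul_pos hμ2 (by linarith)
    have h5 : 0 < 3 * μ1 * γ := by linarith
    rcases mul_pos_iff.mp h5 with ⟨_, h6⟩ | ⟨h6, _⟩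
    · exact h6
    · linarith
  refine ⟨g1, g2, g3, by linear_combination μ1 * h4 + μ2 * h3, ?_⟩
  have heq : μ1 * μ2 * ((lam1 - 1) * (lam2 - 1) - 9 * γ ^ 2) = 0 := by
    linear_combination (μ1 * (lam2 - 1)) * h3 + (3 * μ1 * γ) * h4
  have h0 := (mul_eq_zero.mp heq).resolve_left (mul_pos hμ1 hμ2).ne'
  linarith [h0]
end

section
/- Under the Kähler cvc(1) package described in the context: for every nonzero v ∈ V there exists a nonzero scalar c(v) ∈ ℝ such that A(Jv) = c(v)·J(Av). -/
open scoped RealInnerProductSpace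

/-- In the Kähler cvc(1) package, for every nonzero `v` there is a nonzero
scalar `c(v)` with `A(Jv) = c(v)·J(Av)`. -/
theorem stmt_11
    {V : Type*} [NormedAddCommGroup V] [InnerProductSpace ℝ V] [FiniteDimensional ℝ V]
    (J : V →ₗ[ℝ] V)
    (hJiso : ∀ x y : V, ⟪J x, J y⟫ = ⟪x, y⟫)
    (hJ2 : ∀ x : V, J (J x) = -x)
    (R : V →ₗ[ℝ] V →ₗ[ℝ] V →ₗ[ℝ] V →ₗ[ℝ] ℝ)
    (hskew : ∀ X Y Z W : V, R X Y Z W = - R Y X Z W)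
    (hpair : ∀ X Y Z W : V, R X Y Z W = R Z W X Y)
    (hbianchi : ∀ X Y Z W : V, R X Y Z W + R Y Z X W + R Z X Y W = 0)
    (hkahler : ∀ X Y Z W : V, R (J X) (J Y) Z W = R X Y Z W)
    (hsec : ∀ x y : V, ‖x‖ = 1 → ‖y‖ = 1 → ⟪x, y⟫ = 0 → 1 ≤ R y x x y)
    (A : V →ₗ[ℝ] V) (hAinv : Function.Bijective A)
    (hAskew : ∀ x y : V, ⟪A x, y⟫ = -⟪x, A y⟫)
    (hE : ∀ v : V, ‖v‖ = 1 → ∀ w : V,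
      (⟪w, v⟫ = 0 ∧ ∀ u : V, R w v v u = ⟪w, u⟫) ↔
        w ∈ (Submodule.span ℝ {v, A v})ᗮ) :
    ∀ v : V, v ≠ 0 → ∃ c : ℝ, c ≠ 0 ∧ A (J v) = c • J (A v) := by
  -- J is injective
  have hJinj : Function.Injective J := by
    intro x y h
    have := congrArg J h
    rw [hJ2, hJ2] at this
    exact neg_injective this
  -- norms preserved
  have hJnorm : ∀ x : V, ‖J x‖ = ‖x‖ := by
    intro x
    have h1 : ‖J x‖ * ‖J x‖ = ‖x‖ * ‖x‖ := by
      rw [← real_inner_self_eq_norm_mul_norm, ← real_inner_self_eq_norm_mul_norm, hJiso]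
    nlinarith [norm_nonneg (J x), norm_nonneg x]
  -- Main claim for unit vectors
  have key : ∀ v : V, ‖v‖ = 1 → ∃ c : ℝ, c ≠ 0 ∧ A (J v) = c • J (A v) := by
    intro v hv
    have hJv : ‖J v‖ = 1 := by rw [hJnorm]; exact hv
    set K := Submodule.span ℝ ({J v, J (A v)} : Set V) with hK
    set L := Submodule.span ℝ ({J v, A (J v)} : Set V) with hL
    -- Kᗮ ≤ Lᗮ
    have horth : Kᗮ ≤ Lᗮ := by
      intro z hz
      set w := -(J z) with hw
      have hJw : J w = z := by rw [hw, map_neg, hJ2, neg_neg]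
      -- z is orthogonal to J v and J (A v)
      have hz1 : ⟪J v, z⟫ = 0 :=
        hz (J v) (Submodule.subset_span (by simp))
      have hz2 : ⟪J (A v), z⟫ = 0 :=
        hz (J (A v)) (Submodule.subset_span (by simp))
      -- w ∈ (span {v, A v})ᗮ
      have hwmem : w ∈ (Submodule.span ℝ ({v, A v} : Set V))ᗮ := by
        rw [Submodule.mem_orthogonal]
        intro u hu
        rw [Submodule.mem_span_pair] at hu
        obtain ⟨a, b, rfl⟩ := hu
        have e1 : ⟪v, w⟫ = 0 := by rw [← hJiso, hJw]; exact hz1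
        have e2 : ⟪A v, w⟫ = 0 := by rw [← hJiso, hJw]; exact hz2
        rw [inner_add_left, real_inner_smul_left, real_inner_smul_left, e1, e2]
        ring
      obtain ⟨hw1, hw2⟩ := (hE v hv w).mpr hwmem
      -- Show J w ∈ E_{J v}
      have hmem : J w ∈ (Submodule.span ℝ ({J v, A (J v)} : Set V))ᗮ := by
        apply (hE (J v) hJv (J w)).mp
        constructor
        · rw [hJiso]; exact hw1
        · intro u
          have hu' : J (-(J u)) = u := by rw [map_neg, hJ2, neg_neg]
          calc R (J w) (J v) (J v) u = R w v (J v) u := hkahler w v (J v) u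
            _ = R (J v) u w v := hpair _ _ _ _
            _ = R (J v) (J (-(J u))) w v := by rw [hu']
            _ = R v (-(J u)) w v := hkahler _ _ _ _
            _ = R w v v (-(J u)) := (hpair _ _ _ _).symm
            _ = ⟪w, -(J u)⟫ := hw2 _
            _ = ⟪J w, J (-(J u))⟫ := (hJiso _ _).symm
            _ = ⟪J w, u⟫ := by rw [hu']
      rw [hJw] at hmem
      exact hmem
    -- hence L ≤ K
    have hLK : L ≤ K := by
      have := Submodule.orthogonal_le horth
      rwa [Submodule.orthogonal_orthogonal, Submodule.orthogonal_orthogonal] at this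
    have hAJv : A (J v) ∈ K := hLK (Submodule.subset_span (by simp))
    rw [Submodule.mem_span_pair] at hAJv
    obtain ⟨a, c, hac⟩ := hAJv
    -- inner products with J v
    have i1 : ⟪A (J v), J v⟫ = 0 := by
      have h1 := hAskew (J v) (J v)
      have hsym := real_inner_comm (A (J v)) (J v)
      linarith
    have i2 : ⟪J (A v), J v⟫ = 0 := by
      rw [hJiso]
      have := hAskew v v
      have hsym := real_inner_comm (A v) v
      linarith [hsym ▸ this]
    have i3 : ⟪J v, J v⟫ = 1 := by
      rw [hJiso, real_inner_self_eq_norm_mul_norm, hv]; ring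
    have ha : a = 0 := by
      have := congrArg (fun x => ⟪x, J v⟫) hac
      simp only [inner_add_left, real_inner_smul_left] at this
      rw [i1, i2, i3] at this
      linarith
    rw [ha, zero_smul, zero_add] at hac
    refine ⟨c, ?_, hac.symm⟩
    intro hc0
    rw [hc0, zero_smul] at hac
    have hJv0 : J v ≠ 0 := by
      intro h
      rw [h, norm_zero] at hJv
      exact zero_ne_one hJv
    have : A (J v) ≠ 0 := by
      intro h
      apply hJv0
      exact hAinv.injective (by rw [h, map_zero])
    exact this hac.symm
  -- general case
  intro v hv
  have hnv : ‖v‖ ≠ 0 := norm_ne_zero_iff.mpr hv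
  set v' := (‖v‖)⁻¹ • v with hv'
  have hv'1 : ‖v'‖ = 1 := by
    rw [hv', norm_smul, norm_inv, norm_norm, inv_mul_cancel₀ hnv]
  obtain ⟨c, hc, hceq⟩ := key v' hv'1
  refine ⟨c, hc, ?_⟩
  have := congrArg (fun x => (‖v‖ : ℝ) • x) hceq
  simp only [hv', map_smul, smul_smul] at this ⊢
  rw [mul_inv_cancel₀ hnv, one_smul] at this
  rw [this]
  congr 1
  field_simp
end

section
/- Under the Kähler cvc(1) package described in the context, assume dim V ≥ 4. If σ ⊆ V is a 2-dimensional subspace with A(σ) = σ, then J(σ) = σ. -/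
open scoped RealInnerProductSpace

set_option maxHeartbeats 1000000 in
/-- In the Kähler cvc(1) package with `dim V ≥ 4`, every `A`-invariant
2-dimensional subspace is `J`-invariant. -/
theorem stmt_15
    {V : Type*} [NormedAddCommGroup V] [InnerProductSpace ℝ V] [FiniteDimensional ℝ V]
    (hdim : 4 ≤ Module.finrank ℝ V)
    (J : V →ₗ[ℝ] V)
    (hJiso : ∀ x y : V, ⟪J x, J y⟫ = ⟪x, y⟫)
    (hJ2 : ∀ x : V, J (J x) = -x)
    (R : V →ₗ[ℝ] V →ₗ[ℝ] V →ₗ[ℝ] V →ₗ[ℝ] ℝ)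
    (hskew : ∀ X Y Z W : V, R X Y Z W = - R Y X Z W)
    (hpair : ∀ X Y Z W : V, R X Y Z W = R Z W X Y)
    (hbianchi : ∀ X Y Z W : V, R X Y Z W + R Y Z X W + R Z X Y W = 0)
    (hkahler : ∀ X Y Z W : V, R (J X) (J Y) Z W = R X Y Z W)
    (hsec : ∀ x y : V, ‖x‖ = 1 → ‖y‖ = 1 → ⟪x, y⟫ = 0 → 1 ≤ R y x x y)
    (A : V →ₗ[ℝ] V) (hAinv : Function.Bijective A)
    (hAskew : ∀ x y : V, ⟪A x, y⟫ = -⟪x, A y⟫)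
    (hE : ∀ v : V, ‖v‖ = 1 → ∀ w : V,
      (⟪w, v⟫ = 0 ∧ ∀ u : V, R w v v u = ⟪w, u⟫) ↔
        w ∈ (Submodule.span ℝ {v, A v})ᗮ)
    (σ : Submodule ℝ V) (hσ : Module.finrank ℝ σ = 2)
    (hAσ : Submodule.map A σ = σ) :
    Submodule.map J σ = σ := by
  classical
  -- basic J and A facts
  have hJskew : ∀ x y : V, ⟪J x, y⟫ = -⟪x, J y⟫ := by
    intro x y
    have h1 := hJiso x (J y)
    rw [hJ2, inner_neg_right] at h1
    linarith
  have hJv0 : ∀ x : V, ⟪J x, x⟫ = 0 := by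
    intro x
    have h1 := hJskew x x
    have h2 : ⟪x, J x⟫ = ⟪J x, x⟫ := real_inner_comm _ _
    linarith
  have hA0 : ∀ x : V, ⟪A x, x⟫ = 0 := by
    intro x
    have h1 := hAskew x x
    have h2 : ⟪x, A x⟫ = ⟪A x, x⟫ := real_inner_comm _ _
    linarith
  have hskew2 : ∀ X Y Z W : V, R X Y Z W = -R X Y W Z := by
    intro X Y Z W
    rw [hpair X Y Z W, hskew Z W X Y, hpair W Z X Y]
  have hunit : ∀ x : V, x ≠ 0 → ‖(‖x‖⁻¹ • x)‖ = 1 := by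
    intro x hx
    rw [norm_smul, norm_inv, norm_norm, inv_mul_cancel₀ (norm_ne_zero_iff.mpr hx)]
  have hEr : ∀ x : V, ‖x‖ = 1 → ∀ w : V, ⟪w, x⟫ = 0 → ⟪w, A x⟫ = 0 →
      ∀ u, R w x x u = ⟪w, u⟫ := by
    intro x hx w h1 h2
    refine ((hE x hx w).mpr ?_).2
    rw [Submodule.mem_orthogonal]
    intro u hu
    rcases Submodule.mem_span_pair.mp hu with ⟨p, q, rfl⟩
    have e1 : ⟪x, w⟫ = 0 := by rw [real_inner_comm]; exact h1
    have e2 : ⟪A x, w⟫ = 0 := by rw [real_inner_comm]; exact h2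
    rw [inner_add_left, real_inner_smul_left, real_inner_smul_left, e1, e2]
    ring
  -- reduce to unit vectors
  suffices hmain : ∀ v : V, v ∈ σ → ‖v‖ = 1 → J v ∈ σ by
    have hinj : Function.Injective J := by
      intro a b hab
      have h := congrArg J hab
      rw [hJ2, hJ2] at h
      exact neg_injective h
    have hle : Submodule.map J σ ≤ σ := by
      rintro _ ⟨x, hx, rfl⟩
      by_cases hx0 : x = 0
      · rw [hx0, map_zero]; exact σ.zero_mem
      · have h1 := hmain (‖x‖⁻¹ • x) (σ.smul_mem _ hx) (hunit x hx0)
        rw [map_smul] at h1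
        have h2 := σ.smul_mem (‖x‖) h1
        rwa [smul_smul, mul_inv_cancel₀ (norm_ne_zero_iff.mpr hx0), one_smul] at h2
    have hfr : Module.finrank ℝ σ = Module.finrank ℝ (Submodule.map J σ) :=
      (Submodule.equivMapOfInjective J hinj σ).finrank_eq
    exact Submodule.eq_of_le_of_finrank_le hle hfr.le
  intro v hvσ hv
  by_contra hJvn
  -- setup of v'
  have hv0 : v ≠ 0 := by
    intro h; rw [h, norm_zero] at hv; exact one_ne_zero hv.symm
  have hAvσ : A v ∈ σ := by
    rw [← hAσ]; exact Submodule.mem_map_of_mem hvσ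
  have hAvne : A v ≠ 0 := by
    intro h
    exact hv0 (hAinv.1 (h.trans (map_zero A).symm))
  have hα : (0:ℝ) < ‖A v‖ := norm_pos_iff.mpr hAvne
  obtain ⟨v', hv'def⟩ : ∃ x : V, x = ‖A v‖⁻¹ • A v := ⟨_, rfl⟩
  have hv'1 : ‖v'‖ = 1 := by rw [hv'def]; exact hunit _ hAvne
  have hv'σ : v' ∈ σ := by rw [hv'def]; exact σ.smul_mem _ hAvσ
  have hAveq : A v = ‖A v‖ • v' := by
    rw [hv'def, smul_smul, mul_inv_cancel₀ hα.ne', one_smul]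
  have hvv : ⟪v, v⟫ = 1 := by
    rw [real_inner_self_eq_norm_sq, hv]; norm_num
  have hv'v' : ⟪v', v'⟫ = 1 := by
    rw [real_inner_self_eq_norm_sq, hv'1]; norm_num
  have hvv' : ⟪v, v'⟫ = 0 := by
    rw [hv'def, real_inner_smul_right, real_inner_comm, hA0 v, mul_zero]
  have hv'v : ⟪v', v⟫ = 0 := by rw [real_inner_comm]; exact hvv'
  -- σ = span {v, v'}
  have hli : LinearIndependent ℝ ![v, v'] := by
    rw [LinearIndependent.pair_iff]
    intro s t hst
    have h1 : ⟪s • v + t • v', v⟫ = 0 := by rw [hst, inner_zero_left]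
    have h2 : ⟪s • v + t • v', v'⟫ = 0 := by rw [hst, inner_zero_left]
    rw [inner_add_left, real_inner_smul_left, real_inner_smul_left, hvv, hv'v] at h1
    rw [inner_add_left, real_inner_smul_left, real_inner_smul_left, hvv', hv'v'] at h2
    constructor <;> linarith
  have hrange : Set.range ![v, v'] = {v, v'} := by
    ext x
    constructor
    · rintro ⟨i, rfl⟩
      fin_cases i <;> simp
    · rintro (rfl | rfl)
      · exact ⟨0, rfl⟩
      · exact ⟨1, rfl⟩
  have hspan : Submodule.span ℝ {v, v'} = σ := by
    have hle : Submodule.span ℝ {v, v'} ≤ σ := by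
      rw [Submodule.span_le]
      intro x hx
      rcases hx with rfl | hx
      · exact hvσ
      · rw [Set.mem_singleton_iff] at hx; rw [hx]; exact hv'σ
    refine Submodule.eq_of_le_of_finrank_le hle ?_
    rw [hσ]
    have h2 := finrank_span_eq_card hli
    rw [hrange] at h2
    rw [h2]
    simp
  -- A v' = -‖A v‖ • v
  have hA2σ : A (A v) ∈ Submodule.span ℝ {v, v'} := by
    rw [hspan, ← hAσ]; exact Submodule.mem_map_of_mem hAvσ
  obtain ⟨p, q, hpq⟩ := Submodule.mem_span_pair.mp hA2σ
  have hp : p = -(‖A v‖ * ‖A v‖) := by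
    have h1 : ⟪p • v + q • v', v⟫ = ⟪A (A v), v⟫ := by rw [hpq]
    rw [inner_add_left, real_inner_smul_left, real_inner_smul_left, hvv, hv'v] at h1
    have h2 := hAskew (A v) v
    have h4 : ⟪A v, A v⟫ = ‖A v‖ * ‖A v‖ := by
      rw [real_inner_self_eq_norm_sq]; ring
    have h5 : ⟪v, A v⟫ = ⟪A v, v⟫ := real_inner_comm _ _
    have h6 : ⟪A v, v⟫ = 0 := hA0 v
    -- h2 : ⟪A (A v), v⟫ = -⟪A v, A v⟫
    linarith
  have hq : q = 0 := by
    have h1 : ⟪p • v + q • v', v'⟫ = ⟪A (A v), v'⟫ := by rw [hpq]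
    rw [inner_add_left, real_inner_smul_left, real_inner_smul_left, hvv', hv'v'] at h1
    have h2 : ⟪A (A v), v'⟫ = 0 := by
      rw [hv'def, real_inner_smul_right, hA0, mul_zero]
    linarith
  have hAv' : A v' = (-‖A v‖) • v := by
    rw [hv'def, map_smul, ← hpq, hq, hp]
    rw [zero_smul, add_zero, smul_smul]
    congr 1
    field_simp
  -- decomposition of J v
  obtain ⟨c, hcdef⟩ : ∃ c : ℝ, c = ⟪J v, v'⟫ := ⟨_, rfl⟩
  obtain ⟨b, hbdef⟩ : ∃ x : V, x = J v - c • v' := ⟨_, rfl⟩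
  have hbv : ⟪b, v⟫ = 0 := by
    rw [hbdef, inner_sub_left, real_inner_smul_left, hJv0, hv'v]; ring
  have hbv' : ⟪b, v'⟫ = 0 := by
    rw [hbdef, inner_sub_left, real_inner_smul_left, hv'v', ← hcdef]; ring
  have hJvJv : ⟪J v, J v⟫ = 1 := by rw [hJiso]; exact hvv
  have hv'Jv : ⟪v', J v⟫ = c := by rw [real_inner_comm]; exact hcdef.symm
  have hbb : ⟪b, b⟫ = 1 - c * c := by
    rw [hbdef, inner_sub_left, inner_sub_right, inner_sub_right, real_inner_smul_left,
        real_inner_smul_left, real_inner_smul_right, real_inner_smul_right, hJvJv, hv'v',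
        hv'Jv, ← hcdef]
    ring
  have hbne : b ≠ 0 := by
    intro h
    apply hJvn
    have h2 : J v = c • v' := by
      have h3 := sub_eq_zero.mp (hbdef ▸ h)
      exact h3
    rw [h2]; exact σ.smul_mem _ hv'σ
  obtain ⟨k, hkdef⟩ : ∃ x : ℝ, x = ‖b‖ := ⟨_, rfl⟩
  have hk : 0 < k := hkdef ▸ norm_pos_iff.mpr hbne
  have hk2 : k * k = 1 - c * c := by
    have h := real_inner_self_eq_norm_sq b
    rw [hbb, ← hkdef] at h
    linear_combination -h
  obtain ⟨β, hβdef⟩ : ∃ x : V, x = k⁻¹ • b := ⟨_, rfl⟩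
  have hβv : ⟪β, v⟫ = 0 := by rw [hβdef, real_inner_smul_left, hbv, mul_zero]
  have hβv' : ⟪β, v'⟫ = 0 := by rw [hβdef, real_inner_smul_left, hbv', mul_zero]
  have hββ : ⟪β, β⟫ = 1 := by
    rw [hβdef, real_inner_smul_left, real_inner_smul_right]
    have h : ⟪b, b⟫ = k * k := by rw [hbb, ← hk2]
    rw [h]; field_simp [hk.ne']
  have hJveq : J v = c • v' + k • β := by
    rw [hβdef, smul_smul, mul_inv_cancel₀ hk.ne', one_smul, hbdef]
    abel
  -- decomposition of J v'
  have hJv'v' : ⟪J v', v'⟫ = 0 := hJv0 v'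
  have hJv'v : ⟪J v', v⟫ = -c := by
    rw [hJskew, hv'Jv]
  obtain ⟨b', hb'def⟩ : ∃ x : V, x = J v' + c • v := ⟨_, rfl⟩
  have hb'v : ⟪b', v⟫ = 0 := by
    rw [hb'def, inner_add_left, real_inner_smul_left, hJv'v, hvv]; ring
  have hb'v' : ⟪b', v'⟫ = 0 := by
    rw [hb'def, inner_add_left, real_inner_smul_left, hJv'v', hvv']; ring
  have hJv'Jv' : ⟪J v', J v'⟫ = 1 := by rw [hJiso]; exact hv'v'
  have hvJv' : ⟪v, J v'⟫ = -c := by rw [real_inner_comm]; exact hJv'v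
  have hb'b' : ⟪b', b'⟫ = k * k := by
    rw [hb'def, inner_add_left, inner_add_right, inner_add_right, real_inner_smul_left,
        real_inner_smul_left, real_inner_smul_right, real_inner_smul_right, hJv'Jv', hvv,
        hJv'v, hvJv']
    linear_combination hk2.symm
  have hJvJv' : ⟪J v, J v'⟫ = 0 := by rw [hJiso]; exact hvv'
  have hJvv : ⟪J v, v⟫ = 0 := hJv0 v
  have hbb' : ⟪b, b'⟫ = 0 := by
    rw [hbdef, hb'def, inner_sub_left, inner_add_right, inner_add_right, real_inner_smul_left,
        real_inner_smul_left, real_inner_smul_right, real_inner_smul_right, hJvJv', hJvv,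
        hv'v]
    have h : ⟪v', J v'⟫ = 0 := by rw [real_inner_comm]; exact hJv'v'
    rw [h]; ring
  obtain ⟨β', hβ'def⟩ : ∃ x : V, x = k⁻¹ • b' := ⟨_, rfl⟩
  have hβ'v : ⟪β', v⟫ = 0 := by rw [hβ'def, real_inner_smul_left, hb'v, mul_zero]
  have hβ'v' : ⟪β', v'⟫ = 0 := by rw [hβ'def, real_inner_smul_left, hb'v', mul_zero]
  have hβ'β' : ⟪β', β'⟫ = 1 := by
    rw [hβ'def, real_inner_smul_left, real_inner_smul_right, hb'b']
    field_simp [hk.ne']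
  have hββ' : ⟪β, β'⟫ = 0 := by
    rw [hβdef, hβ'def, real_inner_smul_left, real_inner_smul_right, hbb']; ring
  have hβ'β : ⟪β', β⟫ = 0 := by rw [real_inner_comm]; exact hββ'
  have hJv'eq : J v' = (-c) • v + k • β' := by
    rw [hβ'def, smul_smul, mul_inv_cancel₀ hk.ne', one_smul, hb'def]
    module
  -- J β and J β'
  have hJb : J b = (-(k*k)) • v + (-(c*k)) • β' := by
    rw [hbdef, map_sub, map_smul, hJ2, hJv'eq]
    match_scalars
    · linarith [hk2]
    · ring
  have hJβ : J β = (-k) • v + (-c) • β' := by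
    rw [hβdef, map_smul, hJb]
    match_scalars
    · field_simp [hk.ne']
    · field_simp [hk.ne']
  have hJb' : J b' = (-(k*k)) • v' + (c*k) • β := by
    rw [hb'def, map_add, map_smul, hJ2, hJveq]
    match_scalars
    · linarith [hk2]
    · ring
  have hJβ' : J β' = (-k) • v' + c • β := by
    rw [hβ'def, map_smul, hJb']
    match_scalars
    · field_simp [hk.ne']
    · field_simp [hk.ne']
  -- curvature machinery
  have hEr' : ∀ x : V, x ≠ 0 → ∀ w : V, ⟪w, x⟫ = 0 → ⟪w, A x⟫ = 0 →
      ∀ u, R w x x u = ⟪x, x⟫ * ⟪w, u⟫ := by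
    intro x hx w h1 h2 u
    have hxn := hunit x hx
    have hne : ‖x‖ ≠ 0 := norm_ne_zero_iff.mpr hx
    have hc1 : ⟪w, ‖x‖⁻¹ • x⟫ = 0 := by rw [real_inner_smul_right, h1, mul_zero]
    have hc2 : ⟪w, A (‖x‖⁻¹ • x)⟫ = 0 := by
      rw [map_smul, real_inner_smul_right, h2, mul_zero]
    have h := hEr _ hxn w hc1 hc2 u
    simp only [map_smul, LinearMap.smul_apply, smul_eq_mul] at h
    rw [real_inner_self_eq_norm_sq]
    field_simp [hne] at h
    linear_combination h
  have hF1 : ∀ w : V, ⟪w, v⟫ = 0 → ⟪w, v'⟫ = 0 → ∀ u, R w v v u = ⟪w, u⟫ := by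
    intro w h1 h2 u
    refine hEr v hv w h1 ?_ u
    rw [hAveq, real_inner_smul_right, h2, mul_zero]
  have hF2 : ∀ w : V, ⟪w, v⟫ = 0 → ⟪w, v'⟫ = 0 → ∀ u, R w v' v' u = ⟪w, u⟫ := by
    intro w h1 h2 u
    refine hEr v' hv'1 w h2 ?_ u
    rw [hAv', real_inner_smul_right, h1, mul_zero]
  have hF3 : ∀ w : V, ⟪w, v⟫ = 0 → ⟪w, v'⟫ = 0 → ∀ u,
      R w v v' u + R w v' v u = 0 := by
    intro w h1 h2 u
    have hxne : v + v' ≠ 0 := by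
      intro h
      have h3 : ⟪v + v', v⟫ = 0 := by rw [h, inner_zero_left]
      rw [inner_add_left, hvv, hv'v] at h3; linarith
    have hx2 : ⟪v + v', v + v'⟫ = 2 := by
      rw [inner_add_left, inner_add_right, inner_add_right, hvv, hvv', hv'v, hv'v']; norm_num
    have hc1 : ⟪w, v + v'⟫ = 0 := by rw [inner_add_right, h1, h2]; ring
    have hc2 : ⟪w, A (v + v')⟫ = 0 := by
      rw [map_add, inner_add_right, hAveq, hAv', real_inner_smul_right,
          real_inner_smul_right, h1, h2]
      ring
    have h := hEr' (v + v') hxne w hc1 hc2 u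
    rw [hx2] at h
    simp only [map_add, LinearMap.add_apply] at h
    rw [hF1 w h1 h2 u, hF2 w h1 h2 u] at h
    linarith
  have hF4 : ∀ w : V, ⟪w, v⟫ = 0 → ⟪w, v'⟫ = 0 → ∀ u, R v w w u = ⟪w, w⟫ * ⟪v, u⟫ := by
    intro w h1 h2 u
    by_cases hw0 : w = 0
    · rw [hw0]; simp
    · refine hEr' w hw0 v ?_ ?_ u
      · rw [real_inner_comm]; exact h1
      · have h3 := hAskew w v
        have h4 : ⟪w, A v⟫ = 0 := by rw [hAveq, real_inner_smul_right, h2, mul_zero]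
        rw [real_inner_comm, h3, h4, neg_zero]
  have hL4 : ∀ w : V, ⟪w, v⟫ = 0 → ⟪w, v'⟫ = 0 → ∀ z,
      R v w (J w) z = ⟪w, w⟫ * ⟪J v, z⟫ := by
    intro w h1 h2 z
    by_cases hw0 : w = 0
    · rw [hw0]; simp
    · have hne : ‖w‖ ≠ 0 := norm_ne_zero_iff.mpr hw0
      have hWn : ‖(‖w‖⁻¹ • w)‖ = 1 := hunit w hw0
      have hW1 : ⟪(‖w‖⁻¹ • w), v⟫ = 0 := by rw [real_inner_smul_left, h1, mul_zero]
      have hW2 : ⟪(‖w‖⁻¹ • w), v'⟫ = 0 := by rw [real_inner_smul_left, h2, mul_zero]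
      have hWW : ⟪(‖w‖⁻¹ • w), (‖w‖⁻¹ • w)⟫ = 1 := by
        rw [real_inner_self_eq_norm_sq, hWn]; norm_num
      have hbase : ∀ u, R v (‖w‖⁻¹ • w) (‖w‖⁻¹ • w) u = ⟪v, u⟫ := by
        intro u; rw [hF4 _ hW1 hW2 u, hWW, one_mul]
      have key : R v (‖w‖⁻¹ • w) (J (‖w‖⁻¹ • w)) z = ⟪J v, z⟫ := by
        have hz : J (-(J z)) = z := by rw [map_neg, hJ2, neg_neg]
        calc R v (‖w‖⁻¹ • w) (J (‖w‖⁻¹ • w)) z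
            = R (J v) (J (‖w‖⁻¹ • w)) (J (‖w‖⁻¹ • w)) z := (hkahler v _ _ z).symm
          _ = R (J v) (J (‖w‖⁻¹ • w)) (J (‖w‖⁻¹ • w)) (J (-(J z))) := by rw [hz]
          _ = R v (‖w‖⁻¹ • w) (J (‖w‖⁻¹ • w)) (J (-(J z))) := hkahler v _ _ _
          _ = R (J (‖w‖⁻¹ • w)) (J (-(J z))) v (‖w‖⁻¹ • w) := hpair _ _ _ _
          _ = R (‖w‖⁻¹ • w) (-(J z)) v (‖w‖⁻¹ • w) := hkahler _ _ v _
          _ = R v (‖w‖⁻¹ • w) (‖w‖⁻¹ • w) (-(J z)) := hpair _ _ _ _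
          _ = ⟪v, -(J z)⟫ := hbase _
          _ = ⟪J v, z⟫ := by rw [inner_neg_right]; exact (hJskew v z).symm
      simp only [map_smul, LinearMap.smul_apply, smul_eq_mul] at key
      rw [real_inner_self_eq_norm_sq]
      field_simp [hne] at key
      linear_combination key
  -- the key cross identity  R v β v' z = ⟪β', z⟫
  have hββ'v : ⟪β + β', v⟫ = 0 := by rw [inner_add_left, hβv, hβ'v]; ring
  have hββ'v' : ⟪β + β', v'⟫ = 0 := by rw [inner_add_left, hβv', hβ'v']; ring
  have hsum2 : ⟪β + β', β + β'⟫ = 2 := by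
    rw [inner_add_left, inner_add_right, inner_add_right, hββ, hββ', hβ'β, hβ'β']; norm_num
  have hU1 : ∀ z, R v β v' z = ⟪β', z⟫ := by
    intro z
    have h := hL4 (β + β') hββ'v hββ'v' z
    rw [hsum2, map_add] at h
    simp only [map_add, LinearMap.add_apply] at h
    rw [hL4 β hβv hβv' z, hL4 β' hβ'v hβ'v' z, hββ, hβ'β'] at h
    rw [hJβ, hJβ'] at h
    simp only [map_add, map_smul, LinearMap.add_apply, LinearMap.smul_apply, smul_eq_mul] at h
    rw [hF4 β hβv hβv' z, hF4 β' hβ'v hβ'v' z, hββ, hβ'β'] at h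
    have h9 : R v β' v z = -⟪β', z⟫ := by
      rw [hskew v β' v z, hF1 β' hβ'v hβ'v' z]
    rw [h9] at h
    have hkX : k * R v β v' z = k * ⟪β', z⟫ := by linear_combination -h
    exact mul_left_cancel₀ hk.ne' hkX
  -- Bianchi : R v v' β β' = 2
  have he1 : R β v v' β' = -1 := by
    rw [hskew β v v' β', hU1 β', hβ'β']
  have he2 : R β v' v β' = 1 := by
    have h := hF3 β hβv hβv' β'
    linarith [he1]
  have he3 : R v' β v β' = -1 := by
    rw [hskew v' β v β', he2]
  have hRvv'ββ' : R v v' β β' = 2 := by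
    have hB := hbianchi v v' β β'
    linarith [he1, he3]
  -- Kähler identity forces sec(v, v') = -2
  have hK := hkahler v v' v' v
  rw [hJveq, hJv'eq] at hK
  simp only [map_add, map_smul, LinearMap.add_apply, LinearMap.smul_apply, smul_eq_mul] at hK
  have t1 : R v' v v' v = -R v v' v' v := hskew v' v v' v
  have t2 : R v' β' v' v = 0 := by
    rw [hskew v' β' v' v, hF2 β' hβ'v hβ'v' v, hβ'v]; ring
  have t3 : R β v v' v = 0 := by
    rw [hskew β v v' v, hU1 v, hβ'v]; ring
  have t4 : R β β' v' v = -2 := by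
    rw [hpair β β' v' v, hskew v' v β β', hRvv'ββ']
  rw [t1, t2, t3, t4] at hK
  have hlam : R v v' v' v = -2 := by
    have hkk : k * k ≠ 0 := mul_ne_zero hk.ne' hk.ne'
    have h5 : (R v v' v' v + 2) * (k * k) = 0 := by
      linear_combination (-1 : ℝ) * hK + R v v' v' v * hk2
    rcases mul_eq_zero.mp h5 with h6 | h6
    · linarith
    · exact absurd h6 hkk
  have hfinal := hsec v' v hv'1 hv hv'v
  linarith
end
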